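/- arXiv:1610.08276 — 5 statements merged into one kernel-verified Lean document; each statement's English description precedes it below -/
import Mathlib

section
/- Suppose g(x,y;u) is linear in u, i.e. g = (g⁺+g⁻)/2 + u(g⁺−g⁻)/2. Call a point (x_p, y_p) with |y_p| < α an isochrone point if the time needed by the flow of (f⁻, g⁻) from (x_p, y_p) to reach y = +α equals the time needed by the flow of (f⁺, g⁺) from (x_p, y_p) to reach y = −α. Then there exist constants L > 0, α₀ > 0 and ε₀ > 0 such that for 0 < α ≤ α₀ and 0 < ε ≤ ε₀: (i) every isochrone point satisfies |y_p − α·((g⁺+g⁻)/(g⁺−g⁻))(x_p, 0)| ≤ Lα²; and (ii) every point (x, y, u) of the curve Q with u ∈ [−1,1] satisfies |y − α·((g⁺+g⁻)/(g⁺−g⁻))(x, 0)| ≤ Lε; hence the isochrone and the projection of Q onto the (x,y)-plane coincide up to order O(α², ε). -/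
open Set

lemma flow_bound
    (G F : ℝ → ℝ → ℝ) (M δ c Cb K : ℝ)
    (hc : 0 < c) (hK : 0 ≤ K) (hCb : 0 ≤ Cb)
    (hGpos : ∀ x y : ℝ, |x| ≤ M → |y| ≤ δ → c ≤ G x y)
    (hFb : ∀ x y : ℝ, |x| ≤ M → |y| ≤ δ → |F x y| ≤ Cb)
    (hLip : ∀ x y x' : ℝ, |x| ≤ M → |y| ≤ δ → |x'| ≤ M →
      |G x y - G x' 0| ≤ K * (|x - x'| + |y|))
    (α : ℝ) (hα : 0 < α) (hαδ : α ≤ δ)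
    (X Y : ℝ → ℝ) (T : ℝ) (hT : 0 ≤ T) (xp yp : ℝ)
    (hxp : |xp| ≤ M) (hyp : |yp| < α)
    (hX0 : X 0 = xp) (hY0 : Y 0 = yp)
    (hD : ∀ t ∈ Icc (0:ℝ) T, HasDerivAt X (F (X t) (Y t)) t ∧
      HasDerivAt Y (G (X t) (Y t)) t ∧ |X t| ≤ M)
    (hYT : Y T = α) (hYlt : ∀ t ∈ Ico (0:ℝ) T, Y t < α) :
    |(α - yp) - G xp 0 * T| ≤ (K * (2 * Cb / c + 1)) * (2 / c) * α ^ 2 ∧ T ≤ 2 * α / c := by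
  have hyp1 : -α < yp := (abs_lt.mp hyp).1
  have hyp2 : yp < α := (abs_lt.mp hyp).2
  have hYc : ContinuousOn Y (Icc 0 T) :=
    fun t ht => ((hD t ht).2.1.continuousAt).continuousWithinAt
  have hup : ∀ t ∈ Icc (0:ℝ) T, Y t ≤ α := by
    intro t ht
    rcases eq_or_lt_of_le ht.2 with h | h
    · rw [h, hYT]
    · exact (hYlt t ⟨ht.1, h⟩).le
  -- lower bound: Y stays above -δ
  have hlow : ∀ t ∈ Icc (0:ℝ) T, -δ < Y t := by
    by_contra hcon
    push_neg at hcon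
    obtain ⟨t₀, ht₀, ht₀le⟩ := hcon
    set S : Set ℝ := Icc 0 T ∩ Y ⁻¹' (Iic (-δ)) with hS
    have hScl : IsClosed S :=
      hYc.preimage_isClosed_of_isClosed isClosed_Icc (isClosed_Iic (a := -δ))
    have hScomp : IsCompact S :=
      isCompact_Icc.of_isClosed_subset hScl inter_subset_left
    obtain ⟨s, hsS, hslb⟩ := hScomp.exists_isLeast ⟨t₀, ht₀, ht₀le⟩
    have hsIcc : s ∈ Icc (0:ℝ) T := hsS.1
    have hsY : Y s ≤ -δ := hsS.2
    have hδα : -δ ≤ -α := by linarith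
    have hs0 : 0 < s := by
      rcases eq_or_lt_of_le hsIcc.1 with h | h
      · exfalso
        rw [← h, hY0] at hsY
        linarith
      · exact h
    -- Y monotone on [0, s]
    have hmono : MonotoneOn Y (Icc 0 s) := by
      apply monotoneOn_of_deriv_nonneg (convex_Icc 0 s)
        (hYc.mono (Icc_subset_Icc le_rfl hsIcc.2))
      · intro t ht
        rw [interior_Icc] at ht
        have htT : t ∈ Icc (0:ℝ) T := ⟨ht.1.le, ht.2.le.trans hsIcc.2⟩
        exact ((hD t htT).2.1.differentiableAt).differentiableWithinAt
      · intro t ht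
        rw [interior_Icc] at ht
        have htT : t ∈ Icc (0:ℝ) T := ⟨ht.1.le, ht.2.le.trans hsIcc.2⟩
        rw [(hD t htT).2.1.deriv]
        have hYtlow : -δ < Y t := by
          by_contra h
          push_neg at h
          exact absurd (hslb ⟨htT, h⟩) (not_le.mpr ht.2)
        have hYtup : Y t ≤ δ := (hup t htT).trans hαδ
        have := hGpos (X t) (Y t) (hD t htT).2.2 (abs_le.mpr ⟨hYtlow.le, hYtup⟩)
        linarith
    have := hmono ⟨le_rfl, hs0.le⟩ ⟨hs0.le, le_rfl⟩ hs0.le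
    rw [hY0] at this
    linarith
  have hstrip : ∀ t ∈ Icc (0:ℝ) T, |Y t| ≤ δ :=
    fun t ht => abs_le.mpr ⟨(hlow t ht).le, (hup t ht).trans hαδ⟩
  -- Y is monotone on the whole interval, so |Y t| ≤ α
  have hmonoT : MonotoneOn Y (Icc 0 T) := by
    apply monotoneOn_of_deriv_nonneg (convex_Icc 0 T) hYc
    · intro t ht
      rw [interior_Icc] at ht
      have htT : t ∈ Icc (0:ℝ) T := ⟨ht.1.le, ht.2.le⟩
      exact ((hD t htT).2.1.differentiableAt).differentiableWithinAt
    · intro t ht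
      rw [interior_Icc] at ht
      have htT : t ∈ Icc (0:ℝ) T := ⟨ht.1.le, ht.2.le⟩
      rw [(hD t htT).2.1.deriv]
      have := hGpos (X t) (Y t) (hD t htT).2.2 (hstrip t htT)
      linarith
  have hYα : ∀ t ∈ Icc (0:ℝ) T, |Y t| ≤ α := by
    intro t ht
    have h1 : yp ≤ Y t := by
      have := hmonoT ⟨le_rfl, hT⟩ ht ht.1
      rwa [hY0] at this
    exact abs_le.mpr ⟨by linarith, hup t ht⟩
  -- bound on T
  have hTb : T ≤ 2 * α / c := by
    have hZ : MonotoneOn (fun t => Y t - c * t) (Icc 0 T) := by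
      have hcc : ContinuousOn (fun t : ℝ => Y t - c * t) (Icc 0 T) :=
        hYc.sub (by fun_prop)
      apply monotoneOn_of_deriv_nonneg (convex_Icc 0 T) hcc
      · intro t ht
        rw [interior_Icc] at ht
        have htT : t ∈ Icc (0:ℝ) T := ⟨ht.1.le, ht.2.le⟩
        exact (((hD t htT).2.1.sub
          ((hasDerivAt_id t).const_mul c)).differentiableAt).differentiableWithinAt
      · intro t ht
        rw [interior_Icc] at ht
        have htT : t ∈ Icc (0:ℝ) T := ⟨ht.1.le, ht.2.le⟩
        have hd : HasDerivAt (fun t => Y t - c * t) (G (X t) (Y t) - c * 1) t :=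
          (hD t htT).2.1.sub ((hasDerivAt_id t).const_mul c)
        rw [hd.deriv]
        have := hGpos (X t) (Y t) (hD t htT).2.2 (hstrip t htT)
        linarith
    have h2 := hZ ⟨le_rfl, hT⟩ ⟨hT, le_rfl⟩ hT
    simp only [hY0, hYT, mul_zero, sub_zero] at h2
    rw [le_div_iff₀ hc]
    nlinarith
  -- bound on |X t - xp|
  have hXb : ∀ t ∈ Icc (0:ℝ) T, |X t - xp| ≤ Cb * t := by
    have := norm_image_sub_le_of_norm_deriv_le_segment'
      (f := X) (f' := fun t => F (X t) (Y t)) (a := 0) (b := T) (C := Cb)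
      (fun t ht => (hD t ht).1.hasDerivWithinAt)
      (fun t ht => by
        have htT : t ∈ Icc (0:ℝ) T := ⟨ht.1, ht.2.le⟩
        rw [Real.norm_eq_abs]
        exact hFb (X t) (Y t) (hD t htT).2.2 (hstrip t htT))
    intro t ht
    have h := this t ht
    rw [hX0, Real.norm_eq_abs, sub_zero] at h
    exact h
  -- main estimate
  set r : ℝ := K * (2 * Cb / c + 1) * α with hr
  have hr0 : 0 ≤ r := by
    apply mul_nonneg (mul_nonneg hK _) hα.le
    positivity
  have hW : |(Y T - G xp 0 * T) - (Y 0 - G xp 0 * 0)| ≤ r * (T - 0) := by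
    have := norm_image_sub_le_of_norm_deriv_le_segment'
      (f := fun t => Y t - G xp 0 * t) (f' := fun t => G (X t) (Y t) - G xp 0)
      (a := 0) (b := T) (C := r)
      (fun t ht => by
        have hd : HasDerivAt (fun t => Y t - G xp 0 * t) (G (X t) (Y t) - G xp 0 * 1) t :=
          (hD t ht).2.1.sub ((hasDerivAt_id t).const_mul (G xp 0))
        rw [mul_one] at hd
        exact hd.hasDerivWithinAt)
      (fun t ht => by
        have htT : t ∈ Icc (0:ℝ) T := ⟨ht.1, ht.2.le⟩
        rw [Real.norm_eq_abs]
        have h1 := hLip (X t) (Y t) xp (hD t htT).2.2 (hstrip t htT) hxp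
        have h2 : |X t - xp| ≤ Cb * (2 * α / c) := by
          calc |X t - xp| ≤ Cb * t := hXb t htT
            _ ≤ Cb * (2 * α / c) := by
                apply mul_le_mul_of_nonneg_left (htT.2.trans hTb) hCb
        have h3 : |Y t| ≤ α := hYα t htT
        calc |G (X t) (Y t) - G xp 0| ≤ K * (|X t - xp| + |Y t|) := h1
          _ ≤ K * (Cb * (2 * α / c) + α) := by
              apply mul_le_mul_of_nonneg_left (by linarith) hK
          _ = r := by rw [hr]; field_simp
        )
    have h := this T ⟨hT, le_rfl⟩
    rw [Real.norm_eq_abs] at h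
    exact h
  rw [hYT, hY0, mul_zero, sub_zero, sub_zero] at hW
  constructor
  · have heq : (α - yp) - G xp 0 * T = (α - G xp 0 * T) - yp := by ring
    rw [heq]
    calc |(α - G xp 0 * T) - yp| ≤ r * T := hW
      _ ≤ r * (2 * α / c) := mul_le_mul_of_nonneg_left hTb hr0
      _ = K * (2 * Cb / c + 1) * (2 / c) * α ^ 2 := by rw [hr]; field_simp
  · exact hTb

/-- **Lemma (the fast isochrone).**
Suppose `g(x,y;u)` is linear in `u`, i.e. `g = (g⁺+g⁻)/2 + u (g⁺−g⁻)/2`.  Call a point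
`(x_p,y_p)` with `|y_p| < α` an isochrone point if the time needed by the flow of
`(f⁻,g⁻)` from `(x_p,y_p)` to first reach `y = +α` equals the time needed by the flow of
`(f⁺,g⁺)` from `(x_p,y_p)` to first reach `y = −α`.  Then there are `L > 0`, `α₀ > 0`,
`ε₀ > 0` such that for `0 < α ≤ α₀` and `0 < ε ≤ ε₀`:
(i) every isochrone point satisfies
    `|y_p − α ((g⁺+g⁻)/(g⁺−g⁻))(x_p,0)| ≤ L α²`, and
(ii) every point `(x,y,u)` of the curve `Q = {g(x,0;u) = 0, u = φ((y+αu)/ε)}` with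
    `u ∈ [−1,1]` satisfies `|y − α ((g⁺+g⁻)/(g⁺−g⁻))(x,0)| ≤ L ε`;
hence the isochrone and the projection of `Q` on the `(x,y)`-plane coincide up to
`O(α², ε)`. -/
theorem isochrone_coincides_with_Q
    (f g : ℝ → ℝ → ℝ → ℝ)
    (hf : ContDiff ℝ (⊤ : ℕ∞) fun p : ℝ × ℝ × ℝ => f p.1 p.2.1 p.2.2)
    (hg : ContDiff ℝ (⊤ : ℕ∞) fun p : ℝ × ℝ × ℝ => g p.1 p.2.1 p.2.2)
    (M : ℝ) (hM : 0 < M)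
    (hsign : ∀ x ∈ Icc (-M) M, g x 0 1 < 0 ∧ 0 < g x 0 (-1))
    (hgu : ∀ x ∈ Icc (-M) M, ∀ u : ℝ, deriv (fun w => g x 0 w) u < 0)
    (φ : ℝ → ℝ) (hφ : ContDiff ℝ (⊤ : ℕ∞) φ)
    (hφp : ∀ w : ℝ, 1 ≤ w → φ w = 1) (hφm : ∀ w : ℝ, w ≤ -1 → φ w = -1)
    (hφ' : ∀ w : ℝ, |w| < 1 → 0 < deriv φ w)
    (hlin : ∀ x y u : ℝ,
      g x y u = (g x y 1 + g x y (-1)) / 2 + u * (g x y 1 - g x y (-1)) / 2) :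
    ∃ L > (0 : ℝ), ∃ α₀ > (0 : ℝ), ∃ ε₀ > (0 : ℝ),
      ∀ α ε : ℝ, 0 < α → α ≤ α₀ → 0 < ε → ε ≤ ε₀ →
        -- (i) the isochrone estimate
        (∀ xp yp : ℝ, |xp| ≤ M → |yp| < α →
          ∀ (xm ym xq yq : ℝ → ℝ) (Tm Tp : ℝ), 0 ≤ Tm → 0 ≤ Tp →
            xm 0 = xp → ym 0 = yp →
            (∀ t ∈ Icc (0 : ℝ) Tm,
              HasDerivAt xm (f (xm t) (ym t) (-1)) t ∧
              HasDerivAt ym (g (xm t) (ym t) (-1)) t ∧ |xm t| ≤ M) →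
            ym Tm = α → (∀ t ∈ Ico (0 : ℝ) Tm, ym t < α) →
            xq 0 = xp → yq 0 = yp →
            (∀ t ∈ Icc (0 : ℝ) Tp,
              HasDerivAt xq (f (xq t) (yq t) 1) t ∧
              HasDerivAt yq (g (xq t) (yq t) 1) t ∧ |xq t| ≤ M) →
            yq Tp = -α → (∀ t ∈ Ico (0 : ℝ) Tp, -α < yq t) →
            Tm = Tp →
            |yp - α * ((g xp 0 1 + g xp 0 (-1)) / (g xp 0 1 - g xp 0 (-1)))| ≤
              L * α ^ 2) ∧
        -- (ii) the estimate for the curve Q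
        (∀ x y u : ℝ, |x| ≤ M → u ∈ Icc (-1 : ℝ) 1 →
          g x 0 u = 0 → u = φ ((y + α * u) / ε) →
          |y - α * ((g x 0 1 + g x 0 (-1)) / (g x 0 1 - g x 0 (-1)))| ≤ L * ε) := by
  -- setup
  set S3 : Set (ℝ × ℝ × ℝ) := Icc (-M) M ×ˢ Icc (-1:ℝ) 1 ×ˢ Icc (-1:ℝ) 1 with hS3
  have hS3c : IsCompact S3 := (isCompact_Icc.prod (isCompact_Icc.prod isCompact_Icc))
  have hS3conv : Convex ℝ S3 :=
    (convex_Icc _ _).prod ((convex_Icc _ _).prod (convex_Icc _ _))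
  have hmem : ∀ x y σ : ℝ, |x| ≤ M → |y| ≤ 1 → |σ| ≤ 1 →
      ((x, y, σ) : ℝ × ℝ × ℝ) ∈ S3 := by
    intro x y σ hx hy hσ
    exact ⟨abs_le.mp hx, abs_le.mp hy, abs_le.mp hσ⟩
  obtain ⟨Cg, hCg⟩ := hS3c.exists_bound_of_continuousOn hg.continuous.continuousOn
  obtain ⟨Cf, hCf⟩ := hS3c.exists_bound_of_continuousOn hf.continuous.continuousOn
  have h000 : ((0,0,0) : ℝ × ℝ × ℝ) ∈ S3 := hmem 0 0 0 (by simp [hM.le]) (by norm_num) (by norm_num)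
  have hCg0 : 0 ≤ Cg := (norm_nonneg _).trans (hCg _ h000)
  have hCf0 : 0 ≤ Cf := (norm_nonneg _).trans (hCf _ h000)
  obtain ⟨K0, hK0⟩ := hS3c.exists_bound_of_continuousOn
    ((hg.continuous_fderiv (by simp)).continuousOn)
  have hK00 : 0 ≤ K0 := (norm_nonneg _).trans (hK0 _ h000)
  have hLip3 : ∀ x y x' σ : ℝ, |x| ≤ M → |y| ≤ 1 → |x'| ≤ M → |σ| ≤ 1 →
      |g x y σ - g x' 0 σ| ≤ K0 * (|x - x'| + |y|) := by
    intro x y x' σ hx hy hx' hσ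
    have h := Convex.norm_image_sub_le_of_norm_fderiv_le
      (f := fun p : ℝ × ℝ × ℝ => g p.1 p.2.1 p.2.2) (s := S3) (C := K0)
      (fun p _ => (hg.differentiable (by simp)).differentiableAt)
      hK0 hS3conv (hmem x' 0 σ hx' (by norm_num) hσ) (hmem x y σ hx hy hσ)
    have hn : ‖((x, y, σ) : ℝ × ℝ × ℝ) - (x', 0, σ)‖ ≤ |x - x'| + |y| := by
      have he : ((x, y, σ) : ℝ × ℝ × ℝ) - (x', 0, σ) = (x - x', y - 0, σ - σ) := rfl
      rw [he, Prod.norm_def, Prod.norm_def]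
      simp only [Real.norm_eq_abs, sub_zero, sub_self, abs_zero]
      exact max_le (le_add_of_nonneg_right (abs_nonneg _))
        (max_le (le_add_of_nonneg_left (abs_nonneg _))
          (by positivity))
    calc |g x y σ - g x' 0 σ|
        = ‖(fun p : ℝ × ℝ × ℝ => g p.1 p.2.1 p.2.2) (x, y, σ)
            - (fun p : ℝ × ℝ × ℝ => g p.1 p.2.1 p.2.2) (x', 0, σ)‖ := by
          rw [Real.norm_eq_abs]
      _ ≤ K0 * ‖((x, y, σ) : ℝ × ℝ × ℝ) - (x', 0, σ)‖ := h
      _ ≤ K0 * (|x - x'| + |y|) := mul_le_mul_of_nonneg_left hn hK00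
  -- the minimum c₀
  have hcont1 : ContinuousOn (fun x : ℝ => min (g x 0 (-1)) (-(g x 0 1))) (Icc (-M) M) := by
    have hc3 : Continuous fun x : ℝ => ((x, 0, -1) : ℝ × ℝ × ℝ) := by fun_prop
    have hc4 : Continuous fun x : ℝ => ((x, 0, 1) : ℝ × ℝ × ℝ) := by fun_prop
    have h1 : Continuous fun x : ℝ => g x 0 (-1) := hg.continuous.comp hc3
    have h2 : Continuous fun x : ℝ => g x 0 1 := hg.continuous.comp hc4
    exact (h1.min h2.neg).continuousOn
  obtain ⟨x₀, hx₀S, hx₀min'⟩ := isCompact_Icc.exists_isMinOn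
    ⟨0, by constructor <;> linarith⟩ hcont1
  have hx₀min := isMinOn_iff.mp hx₀min'
  set c₀ : ℝ := min (g x₀ 0 (-1)) (-(g x₀ 0 1)) with hc₀def
  have hc₀ : 0 < c₀ := lt_min (hsign x₀ hx₀S).2 (neg_pos.mpr (hsign x₀ hx₀S).1)
  have hgm0 : ∀ x ∈ Icc (-M) M, c₀ ≤ g x 0 (-1) ∧ g x 0 1 ≤ -c₀ := by
    intro x hx
    have h := hx₀min x hx
    constructor
    · exact h.trans (min_le_left _ _)
    · have := h.trans (min_le_right _ _); linarith
  set δ : ℝ := min 1 (c₀ / (2 * (K0 + 1))) with hδdef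
  have hδ0 : 0 < δ := lt_min one_pos (by positivity)
  have hδ1 : δ ≤ 1 := min_le_left _ _
  set c : ℝ := c₀ / 2 with hcdef
  have hc : 0 < c := by positivity
  have hKδ : K0 * δ ≤ c₀ / 2 := by
    have h1 : δ ≤ c₀ / (2 * (K0 + 1)) := min_le_right _ _
    have h2 : K0 * δ ≤ K0 * (c₀ / (2 * (K0 + 1))) := mul_le_mul_of_nonneg_left h1 hK00
    have hden : (0:ℝ) < 2 * (K0 + 1) := by linarith
    have h3 : K0 * (c₀ / (2 * (K0 + 1))) ≤ c₀ / 2 := by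
      rw [← mul_div_assoc, div_le_div_iff₀ hden two_pos]
      nlinarith
    linarith
  have hstripb : ∀ x y : ℝ, |x| ≤ M → |y| ≤ δ → c ≤ g x y (-1) ∧ g x y 1 ≤ -c := by
    intro x y hx hy
    have hxI : x ∈ Icc (-M) M := by
      rw [mem_Icc]; exact abs_le.mp hx
    have hy1 : |y| ≤ 1 := hy.trans hδ1
    have hKy : K0 * |y| ≤ c₀ / 2 := by
      have := mul_le_mul_of_nonneg_left hy hK00
      linarith
    constructor
    · have hl := hLip3 x y x (-1) hx hy1 hx (by norm_num)
      rw [sub_self, abs_zero, zero_add] at hl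
      have := (abs_le.mp hl).1
      have := (hgm0 x hxI).1
      simp only [hcdef]
      linarith
    · have hl := hLip3 x y x 1 hx hy1 hx (by norm_num)
      rw [sub_self, abs_zero, zero_add] at hl
      have := (abs_le.mp hl).2
      have := (hgm0 x hxI).2
      simp only [hcdef]
      linarith

  set K₃ : ℝ := K0 * (2 * Cf / c + 1) * (2 / c) with hK₃def
  have hK₃0 : 0 ≤ K₃ := by
    rw [hK₃def]
    apply mul_nonneg (mul_nonneg hK00 (by positivity)) (by positivity)
  set L : ℝ := max 1 (2 * Cg * K₃ / (2 * c)) with hLdef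
  have hL1 : (1:ℝ) ≤ L := le_max_left _ _
  refine ⟨L, by linarith, δ, hδ0, 1, one_pos, ?_⟩
  intro α ε hα hαle hε hε1
  constructor
  · -- part (i)
    intro xp yp hxp hyp xm ym xq yq Tm Tp hTm0 hTp0 hxm0 hym0 hDm hymT hymlt
      hxq0 hyq0 hDq hyqT hyqgt hTT
    have hαδ : α ≤ δ := hαle
    obtain ⟨E1, _⟩ := flow_bound (fun x y => g x y (-1)) (fun x y => f x y (-1))
      M δ c Cf K0 hc hK00 hCf0
      (fun x y hx hy => (hstripb x y hx hy).1)
      (fun x y hx hy => by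
        have := hCf (x, y, -1) (hmem x y (-1) hx (hy.trans hδ1) (by norm_num))
        simpa [Real.norm_eq_abs] using this)
      (fun x y x' hx hy hx' => hLip3 x y x' (-1) hx (hy.trans hδ1) hx' (by norm_num))
      α hα hαδ xm ym Tm hTm0 xp yp hxp hyp hxm0 hym0 hDm hymT hymlt
    obtain ⟨E2, _⟩ := flow_bound (fun x y => -(g x (-y) 1)) (fun x y => f x (-y) 1)
      M δ c Cf K0 hc hK00 hCf0
      (fun x y hx hy => by
        show c ≤ -(g x (-y) 1)
        have h := (hstripb x (-y) hx (by rwa [abs_neg])).2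
        linarith)
      (fun x y hx hy => by
        have := hCf (x, -y, 1)
          (hmem x (-y) 1 hx (by rw [abs_neg]; exact hy.trans hδ1) (by norm_num))
        simpa [Real.norm_eq_abs] using this)
      (fun x y x' hx hy hx' => by
        simp only [neg_zero]
        have h := hLip3 x (-y) x' 1 hx (by rw [abs_neg]; exact hy.trans hδ1) hx'
          (by norm_num)
        rw [abs_neg] at h
        calc |-(g x (-y) 1) - -(g x' 0 1)|
            = |g x (-y) 1 - g x' 0 1| := by
              rw [show -(g x (-y) 1) - -(g x' 0 1) = -(g x (-y) 1 - g x' 0 1) by ring,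
                abs_neg]
          _ ≤ K0 * (|x - x'| + |y|) := h)
      α hα hαδ xq (fun t => -(yq t)) Tp hTp0 xp (-yp) hxp (by rwa [abs_neg])
      hxq0 (by show -(yq 0) = -yp; rw [hyq0])
      (fun t ht => ⟨by simpa only [neg_neg] using (hDq t ht).1,
        by simpa only [neg_neg] using (hDq t ht).2.1.fun_neg, (hDq t ht).2.2⟩)
      (by show -(yq Tp) = α; rw [hyqT, neg_neg])
      (fun t ht => by show -(yq t) < α; have := hyqgt t ht; linarith)
    simp only [neg_zero] at E2
    rw [hTT] at E1
    have hxpI : xp ∈ Icc (-M) M := by rw [mem_Icc]; exact abs_le.mp hxp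
    have hGpb : |g xp 0 1| ≤ Cg := by
      have := hCg (xp, 0, 1) (hmem xp 0 1 hxp (by norm_num) (by norm_num))
      simpa [Real.norm_eq_abs] using this
    have hGmb : |g xp 0 (-1)| ≤ Cg := by
      have := hCg (xp, 0, -1) (hmem xp 0 (-1) hxp (by norm_num) (by norm_num))
      simpa [Real.norm_eq_abs] using this
    set Gp := g xp 0 1 with hGpdef
    set Gm := g xp 0 (-1) with hGmdef
    have hGm0' : c₀ ≤ Gm := (hgm0 xp hxpI).1
    have hGp0' : Gp ≤ -c₀ := (hgm0 xp hxpI).2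
    have hDlt : Gp - Gm < 0 := by linarith
    have hDne : Gp - Gm ≠ 0 := ne_of_lt hDlt
    have key : yp - α * ((Gp + Gm) / (Gp - Gm))
        = (yp * (Gp - Gm) - α * (Gp + Gm)) / (Gp - Gm) := by
      field_simp
    rw [key, abs_div]
    have hE1' : |(α - yp) - Gm * Tp| ≤ K₃ * α ^ 2 := by
      rw [hK₃def]; exact E1
    have hE2' : |(α + yp) + Gp * Tp| ≤ K₃ * α ^ 2 := by
      rw [hK₃def]
      have heq : (α + yp) + Gp * Tp = (α - -yp) - -Gp * Tp := by ring
      rw [heq]; exact E2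
    have hK₃α : 0 ≤ K₃ * α ^ 2 := mul_nonneg hK₃0 (sq_nonneg α)
    have hnum : |yp * (Gp - Gm) - α * (Gp + Gm)| ≤ 2 * Cg * (K₃ * α ^ 2) := by
      have hid : yp * (Gp - Gm) - α * (Gp + Gm)
          = -((((α - yp) - Gm * Tp)) * Gp) - ((α + yp) + Gp * Tp) * Gm := by ring
      rw [hid]
      have h1 : |(((α - yp) - Gm * Tp)) * Gp| ≤ K₃ * α ^ 2 * Cg := by
        rw [abs_mul]
        exact mul_le_mul hE1' hGpb (abs_nonneg _) hK₃α
      have h2 : |((α + yp) + Gp * Tp) * Gm| ≤ K₃ * α ^ 2 * Cg := by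
        rw [abs_mul]
        exact mul_le_mul hE2' hGmb (abs_nonneg _) hK₃α
      calc |-((((α - yp) - Gm * Tp)) * Gp) - ((α + yp) + Gp * Tp) * Gm|
          ≤ |-((((α - yp) - Gm * Tp)) * Gp)| + |((α + yp) + Gp * Tp) * Gm| :=
            abs_sub _ _
        _ = |(((α - yp) - Gm * Tp)) * Gp| + |((α + yp) + Gp * Tp) * Gm| := by
            rw [abs_neg]
        _ ≤ K₃ * α ^ 2 * Cg + K₃ * α ^ 2 * Cg := add_le_add h1 h2
        _ = 2 * Cg * (K₃ * α ^ 2) := by ring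
    have hden2 : 2 * c ≤ |Gp - Gm| := by
      rw [abs_of_neg hDlt]
      have : c = c₀ / 2 := hcdef
      linarith
    calc |yp * (Gp - Gm) - α * (Gp + Gm)| / |Gp - Gm|
        ≤ 2 * Cg * (K₃ * α ^ 2) / (2 * c) := by
          apply div_le_div₀ (by positivity) hnum (by linarith) hden2
      _ = (2 * Cg * K₃ / (2 * c)) * α ^ 2 := by
          field_simp
      _ ≤ L * α ^ 2 := mul_le_mul_of_nonneg_right (le_max_right _ _) (sq_nonneg α)
  · -- part (ii)
    intro x y u hx hu hg0 hφeq
    have hxI : x ∈ Icc (-M) M := by rw [mem_Icc]; exact abs_le.mp hx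
    have hgp := (hsign x hxI).1
    have hgm := (hsign x hxI).2
    set Gp := g x 0 1 with hGpdef
    set Gm := g x 0 (-1) with hGmdef
    have hlin0 := hlin x 0 u
    rw [hg0] at hlin0
    have hueq : u * (Gm - Gp) = Gp + Gm := by linarith
    have hden : 0 < Gm - Gp := by linarith
    have hu1 : |u| < 1 := by
      have h1 : (1 - u) * (Gm - Gp) = -(2 * Gp) := by linear_combination -hueq
      have h2 : (1 + u) * (Gm - Gp) = 2 * Gm := by linear_combination hueq
      have h3 : 0 < (1 - u) * (Gm - Gp) := by rw [h1]; linarith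
      have h4 : 0 < (1 + u) * (Gm - Gp) := by rw [h2]; linarith
      rw [abs_lt]
      constructor <;> nlinarith
    have hne : Gp - Gm ≠ 0 := ne_of_lt (by linarith)
    have hratio : (Gp + Gm) / (Gp - Gm) = -u := by
      rw [div_eq_iff hne]
      linear_combination -hueq
    have hexpr : y - α * ((Gp + Gm) / (Gp - Gm)) = y + α * u := by
      rw [hratio]; ring
    rw [hexpr]
    set w := (y + α * u) / ε with hwdef
    have hw1 : |w| < 1 := by
      by_contra hcon
      push_neg at hcon
      rcases le_abs.mp hcon with h | h
      · rw [hφp w h] at hφeq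
        rw [hφeq] at hu1; norm_num at hu1
      · have hw2 : w ≤ -1 := by linarith
        rw [hφm w hw2] at hφeq
        rw [hφeq] at hu1; norm_num at hu1
    have hyαu : y + α * u = w * ε := by
      rw [hwdef, div_mul_cancel₀ _ (ne_of_gt hε)]
    rw [hyαu, abs_mul, abs_of_pos hε]
    calc |w| * ε ≤ 1 * ε := mul_le_mul_of_nonneg_right hw1.le hε.le
      _ ≤ L * ε := mul_le_mul_of_nonneg_right hL1 hε.le
end

section
/- Let x̄ ∈ [x₀ − γ/2, x_F(T) + γ/2] and 0 < α ≤ α₀, and let T⁻(x̄) be the time needed for the solution of ẋ = f⁻(x,y), ẏ = g⁻(x,y) with initial condition (x̄, −α) to reach y = α. Then there exists a constant L > 0, depending only on (f⁻, g⁻) and its derivatives on K, such that |T⁻(x̄) − 2α/g⁻(x̄, 0)| ≤ Lα², uniformly in x̄. -/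
open Set

/-- **Lemma (asymptotics of the crossing time).**
In the normalized setting (`f⁺ ≡ 0`, `g⁺ ≡ −1`, bounds `0 < D < f⁻,g⁻ < C` on
`K = [−M,M]×[−α₁,α₁]`), there is a constant `L > 0`, depending only on `(f⁻,g⁻)` and
its derivatives on `K`, such that uniformly for every `x̄ ∈ [x₀−γ/2, x_F(T)+γ/2]` and
every `0 < α ≤ α₀`, the time `T⁻(x̄)` needed for the solution of `(f⁻,g⁻)` starting at
`(x̄,−α)` (which remains in the rectangle `[x₀−γ, x_F(T)+γ]×[−α,α] ⊆ K`) to reach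
`y = α` satisfies `|T⁻(x̄) − 2α/g⁻(x̄,0)| ≤ L α²`. -/
theorem hysteresis_crossing_time_asymptotics
    (f g : ℝ → ℝ → ℝ → ℝ)
    (hf : ContDiff ℝ (⊤ : ℕ∞) fun p : ℝ × ℝ × ℝ => f p.1 p.2.1 p.2.2)
    (hg : ContDiff ℝ (⊤ : ℕ∞) fun p : ℝ × ℝ × ℝ => g p.1 p.2.1 p.2.2)
    (hfp : ∀ x y : ℝ, f x y 1 = 0) (hgp : ∀ x y : ℝ, g x y 1 = -1)
    (M α₁ C D : ℝ) (hM : 0 < M) (hα₁ : 0 < α₁) (hD : 0 < D) (hDC : D < C)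
    (hbound : ∀ x y : ℝ, |x| ≤ M → |y| ≤ α₁ →
      D < f x y (-1) ∧ f x y (-1) < C ∧ D < g x y (-1) ∧ g x y (-1) < C)
    (T : ℝ) (hT : 0 < T)
    (x₀ : ℝ) (xF : ℝ → ℝ) (hxF0 : xF 0 = x₀)
    (hxF : ∀ t ∈ Icc (0 : ℝ) T,
      HasDerivAt xF (f (xF t) 0 (-1) / (g (xF t) 0 (-1) + 1)) t)
    (hxFM : ∀ t ∈ Icc (0 : ℝ) T, xF t ∈ Ioo (-M) M)
    (γ : ℝ) (hγ : 0 < γ)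
    (hrect : -M ≤ x₀ - γ ∧ xF T + γ ≤ M)
    (α₀ : ℝ) (hα₀ : 0 < α₀ ∧ α₀ < min α₁ (D * γ / (4 * C))) :
    ∃ L > (0 : ℝ),
      ∀ xbar : ℝ, xbar ∈ Icc (x₀ - γ / 2) (xF T + γ / 2) →
      ∀ α : ℝ, 0 < α → α ≤ α₀ →
      ∀ (xm ym : ℝ → ℝ) (Tm : ℝ), 0 ≤ Tm →
        xm 0 = xbar → ym 0 = -α →
        (∀ t ∈ Icc (0 : ℝ) Tm,
          HasDerivAt xm (f (xm t) (ym t) (-1)) t ∧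
          HasDerivAt ym (g (xm t) (ym t) (-1)) t ∧
          xm t ∈ Icc (x₀ - γ) (xF T + γ) ∧ ym t ∈ Icc (-α) α) →
        ym Tm = α → (∀ t ∈ Ico (0 : ℝ) Tm, ym t < α) →
        |Tm - 2 * α / g xbar 0 (-1)| ≤ L * α ^ 2 := by
  classical
  have hC : (0 : ℝ) < C := hD.trans hDC
  -- the frozen map G(x,y) = g(x,y,-1)
  set G : ℝ × ℝ → ℝ := fun p => g p.1 p.2 (-1) with hGdef
  have hemb : ContDiff ℝ (⊤ : ℕ∞) fun p : ℝ × ℝ => (p.1, p.2, (-1 : ℝ)) :=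
    contDiff_fst.prodMk (contDiff_snd.prodMk contDiff_const)
  have hG : ContDiff ℝ (⊤ : ℕ∞) G := hg.comp hemb
  have hGc : Continuous G := hG.continuous
  have hFc : Continuous fun p : ℝ × ℝ => f p.1 p.2 (-1) := (hf.comp hemb).continuous
  have hfd : Continuous (fderiv ℝ G) := hG.continuous_fderiv (by simp)
  set S : Set (ℝ × ℝ) := Icc (-M) M ×ˢ Icc (-α₁) α₁ with hSdef
  have hScomp : IsCompact S := isCompact_Icc.prod isCompact_Icc
  have hSconv : Convex ℝ S := (convex_Icc _ _).prod (convex_Icc _ _)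
  obtain ⟨B0, hB0⟩ := hScomp.exists_bound_of_continuousOn hfd.continuousOn
  set B := max B0 0 with hBdef
  have hBnn : (0 : ℝ) ≤ B := le_max_right _ _
  have hBb : ∀ p ∈ S, ‖fderiv ℝ G p‖ ≤ B := fun p hp => (hB0 p hp).trans (le_max_left _ _)
  have hlip : ∀ p ∈ S, ∀ q ∈ S, ‖G q - G p‖ ≤ B * ‖q - p‖ := by
    intro p hp q hq
    exact hSconv.norm_image_sub_le_of_norm_fderiv_le
      (fun x _ => (hG.differentiable (by simp)).differentiableAt) hBb hp hq
  set E : ℝ := B * (2 * C / D + 1) with hEdef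
  have hEnn : (0 : ℝ) ≤ E := by
    have h2 : (0 : ℝ) ≤ 2 * C / D + 1 := by
      have : (0:ℝ) ≤ 2 * C / D := div_nonneg (by linarith) hD.le
      linarith
    exact mul_nonneg hBnn h2
  have hLpos : (0:ℝ) < E * 2 / (D * D) + 1 := by
    have : (0:ℝ) ≤ E * 2 / (D * D) :=
      div_nonneg (mul_nonneg hEnn (by norm_num)) (mul_nonneg hD.le hD.le)
    linarith
  refine ⟨E * 2 / (D * D) + 1, hLpos, ?_⟩
  intro xbar hxbar α hα hαα₀ xm ym Tm hTm hxm0 hym0 hsol hymTm _hlt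
  have hαα₁ : α ≤ α₁ := le_of_lt (lt_of_le_of_lt hαα₀ (lt_of_lt_of_le hα₀.2 (min_le_left _ _)))
  -- membership of trajectory in K
  have hKmem : ∀ t ∈ Icc (0 : ℝ) Tm, |xm t| ≤ M ∧ |ym t| ≤ α₁ := by
    intro t ht
    obtain ⟨-, -, hx, hy⟩ := hsol t ht
    constructor
    · rw [abs_le]; exact ⟨by linarith [hrect.1, hx.1], by linarith [hrect.2, hx.2]⟩
    · rw [abs_le]; exact ⟨by linarith [hy.1], by linarith [hy.2]⟩
  have hgb : ∀ t ∈ Icc (0 : ℝ) Tm,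
      D ≤ g (xm t) (ym t) (-1) ∧ g (xm t) (ym t) (-1) ≤ C := by
    intro t ht
    obtain ⟨hx, hy⟩ := hKmem t ht
    obtain ⟨-, -, h3, h4⟩ := hbound (xm t) (ym t) hx hy
    exact ⟨h3.le, h4.le⟩
  have hfb : ∀ t ∈ Icc (0 : ℝ) Tm, |f (xm t) (ym t) (-1)| ≤ C := by
    intro t ht
    obtain ⟨hx, hy⟩ := hKmem t ht
    obtain ⟨h1, h2, -, -⟩ := hbound (xm t) (ym t) hx hy
    rw [abs_le]; exact ⟨by linarith, h2.le⟩
  -- continuity of the trajectory and the vector field along it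
  have hxmc : ContinuousOn xm (Icc 0 Tm) := fun t ht =>
    ((hsol t ht).1).continuousAt.continuousWithinAt
  have hymc : ContinuousOn ym (Icc 0 Tm) := fun t ht =>
    ((hsol t ht).2.1).continuousAt.continuousWithinAt
  have hgc : ContinuousOn (fun t => g (xm t) (ym t) (-1)) (Icc 0 Tm) :=
    hGc.comp_continuousOn (hxmc.prodMk hymc)
  have hfcc : ContinuousOn (fun t => f (xm t) (ym t) (-1)) (Icc 0 Tm) :=
    hFc.comp_continuousOn (hxmc.prodMk hymc)
  have huIcc : Set.uIcc (0 : ℝ) Tm = Icc 0 Tm := uIcc_of_le hTm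
  have hgint : IntervalIntegrable (fun t => g (xm t) (ym t) (-1))
      MeasureTheory.volume 0 Tm := (huIcc ▸ hgc).intervalIntegrable
  -- FTC for y
  have hftc : ∫ t in (0:ℝ)..Tm, g (xm t) (ym t) (-1) = ym Tm - ym 0 :=
    intervalIntegral.integral_eq_sub_of_hasDerivAt
      (fun t ht => (hsol t (huIcc ▸ ht)).2.1) hgint
  have hint2α : ∫ t in (0:ℝ)..Tm, g (xm t) (ym t) (-1) = 2 * α := by
    rw [hftc, hymTm, hym0]; ring
  -- Tm ≤ 2α/D
  have hDTm : D * Tm ≤ 2 * α := by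
    have h1 : ∫ _t in (0:ℝ)..Tm, D ≤ ∫ t in (0:ℝ)..Tm, g (xm t) (ym t) (-1) :=
      intervalIntegral.integral_mono_on hTm intervalIntegrable_const hgint
        (fun t ht => (hgb t ht).1)
    rw [intervalIntegral.integral_const, hint2α] at h1
    simpa [smul_eq_mul, mul_comm] using h1
  have hTm2α : Tm ≤ 2 * α / D := by
    rw [le_div_iff₀ hD]; linarith [hDTm]
  -- drift bound for x
  have hxmb : ∀ t ∈ Icc (0 : ℝ) Tm, |xm t - xbar| ≤ C * Tm := by
    intro t ht
    have hsub : Icc (0:ℝ) t ⊆ Icc 0 Tm := Icc_subset_Icc le_rfl ht.2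
    have huIcc' : Set.uIcc (0 : ℝ) t = Icc 0 t := uIcc_of_le ht.1
    have hintf : IntervalIntegrable (fun s => f (xm s) (ym s) (-1))
        MeasureTheory.volume 0 t := (huIcc' ▸ (hfcc.mono hsub)).intervalIntegrable
    have hftcx : ∫ s in (0:ℝ)..t, f (xm s) (ym s) (-1) = xm t - xm 0 :=
      intervalIntegral.integral_eq_sub_of_hasDerivAt
        (fun s hs => (hsol s (hsub (huIcc' ▸ hs))).1) hintf
    have hb : ‖∫ s in (0:ℝ)..t, f (xm s) (ym s) (-1)‖ ≤ C * |t - 0| := by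
      apply intervalIntegral.norm_integral_le_of_norm_le_const
      intro s hs
      rw [Set.uIoc_of_le ht.1] at hs
      have hs' : s ∈ Icc (0:ℝ) Tm := ⟨hs.1.le, hs.2.trans ht.2⟩
      simpa [Real.norm_eq_abs] using hfb s hs'
    rw [hftcx, hxm0] at hb
    have ht0 : |t - 0| = t := by rw [sub_zero, abs_of_nonneg ht.1]
    rw [Real.norm_eq_abs, ht0] at hb
    exact hb.trans (by nlinarith [ht.2])
  -- membership in S
  have hxbarS : ((xbar, (0:ℝ)) : ℝ × ℝ) ∈ S := by
    constructor
    · exact ⟨by simp; linarith [hrect.1, hxbar.1, hγ], by simp; linarith [hrect.2, hxbar.2, hγ]⟩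
    · exact ⟨by simp; linarith, by simp; linarith⟩
  -- pointwise Lipschitz estimate
  have hpt : ∀ t ∈ Icc (0 : ℝ) Tm, |g (xm t) (ym t) (-1) - g xbar 0 (-1)| ≤ E * α := by
    intro t ht
    obtain ⟨hxM, hyα₁⟩ := hKmem t ht
    have hqS : ((xm t, ym t) : ℝ × ℝ) ∈ S := ⟨by simpa [abs_le] using hxM, by simpa [abs_le] using hyα₁⟩
    have h := hlip _ hxbarS _ hqS
    have hnorm : ‖((xm t, ym t) : ℝ × ℝ) - (xbar, 0)‖ = max |xm t - xbar| |ym t| := by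
      simp [Prod.norm_def, Real.norm_eq_abs, Prod.sub_def]
    have hmax : max |xm t - xbar| |ym t| ≤ (2 * C / D + 1) * α := by
      have h1 := hxmb t ht
      have hCT : C * Tm ≤ 2 * C / D * α := by
        rw [div_mul_eq_mul_div, le_div_iff₀ hD]
        calc C * Tm * D = C * (D * Tm) := by ring
          _ ≤ C * (2 * α) := mul_le_mul_of_nonneg_left hDTm hC.le
          _ = 2 * C * α := by ring
      have hy := (hsol t ht).2.2.2
      have h2 : |ym t| ≤ α := abs_le.2 ⟨hy.1, hy.2⟩
      have h3 : (0:ℝ) ≤ 2 * C / D * α :=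
        mul_nonneg (div_nonneg (by linarith) hD.le) hα.le
      have hexp : (2 * C / D + 1) * α = 2 * C / D * α + α := by ring
      apply max_le <;> rw [hexp] <;> linarith
    calc |g (xm t) (ym t) (-1) - g xbar 0 (-1)|
        = ‖G (xm t, ym t) - G (xbar, 0)‖ := by simp [hGdef, Real.norm_eq_abs]
      _ ≤ B * ‖((xm t, ym t) : ℝ × ℝ) - (xbar, 0)‖ := h
      _ ≤ B * ((2 * C / D + 1) * α) := by
          rw [hnorm]; exact mul_le_mul_of_nonneg_left hmax hBnn
      _ = E * α := by rw [hEdef]; ring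
  -- integral of the difference
  set g0 : ℝ := g xbar 0 (-1) with hg0def
  have hg0 : D < g0 ∧ g0 < C := by
    have hx : |xbar| ≤ M := by
      rw [abs_le]
      exact ⟨by linarith [hrect.1, hxbar.1, hγ], by linarith [hrect.2, hxbar.2, hγ]⟩
    have hy : |(0:ℝ)| ≤ α₁ := by simp [hα₁.le]
    obtain ⟨-, -, h3, h4⟩ := hbound xbar 0 hx hy
    exact ⟨h3, h4⟩
  have hintdiff : ∫ t in (0:ℝ)..Tm, (g (xm t) (ym t) (-1) - g0) = 2 * α - Tm * g0 := by
    rw [intervalIntegral.integral_sub hgint intervalIntegrable_const, hint2α,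
      intervalIntegral.integral_const]
    simp [smul_eq_mul]
  have hkey : |2 * α - Tm * g0| ≤ E * α * Tm := by
    have hb : ‖∫ t in (0:ℝ)..Tm, (g (xm t) (ym t) (-1) - g0)‖ ≤ E * α * |Tm - 0| := by
      apply intervalIntegral.norm_integral_le_of_norm_le_const
      intro s hs
      rw [Set.uIoc_of_le hTm] at hs
      have hs' : s ∈ Icc (0:ℝ) Tm := ⟨hs.1.le, hs.2⟩
      simpa [Real.norm_eq_abs] using hpt s hs'
    rw [hintdiff, Real.norm_eq_abs, sub_zero, abs_of_nonneg hTm] at hb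
    exact hb
  -- conclude
  have hg0pos : (0 : ℝ) < g0 := hD.trans hg0.1
  have heq : Tm - 2 * α / g0 = (Tm * g0 - 2 * α) / g0 := by
    field_simp
  rw [heq, abs_div, abs_of_pos hg0pos]
  have habs : |Tm * g0 - 2 * α| = |2 * α - Tm * g0| := abs_sub_comm _ _
  rw [habs]
  have hchain : |2 * α - Tm * g0| ≤ E * 2 / D * α ^ 2 := by
    have h1 : E * α * Tm ≤ E * α * (2 * α / D) :=
      mul_le_mul_of_nonneg_left hTm2α (mul_nonneg hEnn hα.le)
    have h2 : E * α * (2 * α / D) = E * 2 / D * α ^ 2 := by ring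
    linarith [hkey, h1.trans_eq h2]
  rw [div_le_iff₀ hg0pos]
  have hrhs : E * 2 / D * α ^ 2 ≤ (E * 2 / (D * D) + 1) * α ^ 2 * g0 := by
    have hα2 : (0 : ℝ) ≤ α ^ 2 := sq_nonneg α
    have hf1 : (0:ℝ) ≤ (E * 2 / (D * D) + 1) * α ^ 2 :=
      mul_nonneg (add_nonneg (div_nonneg (mul_nonneg hEnn (by norm_num))
        (mul_nonneg hD.le hD.le)) zero_le_one) hα2
    have hf2 : (E * 2 / (D * D) + 1) * α ^ 2 * D ≤ (E * 2 / (D * D) + 1) * α ^ 2 * g0 :=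
      mul_le_mul_of_nonneg_left hg0.1.le hf1
    have hf3 : (E * 2 / (D * D) + 1) * α ^ 2 * D = E * 2 / D * α ^ 2 + D * α ^ 2 := by
      field_simp
    have hf4 : (0:ℝ) ≤ D * α ^ 2 := mul_nonneg hD.le hα2
    linarith
  exact hchain.trans hrhs
end

section
/- Let x̄ ∈ [x₀ − γ/2, x_F(T) + γ/2] and 0 < α ≤ α₀. Let x̄_F(t) solve the Filippov equation ẋ = f⁻(x,0)/(1 + g⁻(x,0)) with x̄_F(0) = x̄, and let (x_h(t), y_h(t)) be the hysteretic solution with initial condition (x̄, −α). Let S = S(x̄) = T⁻(x̄) + 2α be the time of one hysteretic cycle, where T⁻(x̄) is the time for the flow of (f⁻, g⁻) from (x̄, −α) to reach y = α. Then there exists a constant L > 0, uniform on K, such that |x_h(S) − x̄_F(S)| ≤ Lα². -/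
open Set

lemma hysteresis_exists_lip (φ : ℝ × ℝ → ℝ) (hφ : ContDiff ℝ (⊤ : ℕ∞) φ) (s : Set (ℝ × ℝ))
    (hconv : Convex ℝ s) (hcomp : IsCompact s) :
    ∃ K : ℝ, 0 ≤ K ∧ ∀ p ∈ s, ∀ q ∈ s, |φ p - φ q| ≤ K * dist p q := by
  obtain ⟨B, hB⟩ := hcomp.exists_bound_of_continuousOn
    ((hφ.continuous_fderiv (by simp)).norm.continuousOn)
  refine ⟨max B 0, le_max_right _ _, fun p hp q hq => ?_⟩
  have key := hconv.norm_image_sub_le_of_norm_hasFDerivWithin_le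
    (f := φ) (f' := fderiv ℝ φ)
    (fun x _ => (hφ.differentiable (by simp) x).hasFDerivAt.hasFDerivWithinAt)
    (fun x hx => by
      have h1 := hB x hx
      rw [Real.norm_eq_abs, abs_of_nonneg (norm_nonneg _)] at h1
      exact h1.trans (le_max_left B 0)) hq hp
  simpa [Real.norm_eq_abs, dist_eq_norm] using key

lemma hysteresis_drift_bound {z z' : ℝ → ℝ} {c ε Tt : ℝ} (hT : 0 ≤ Tt)
    (hz : ∀ t ∈ Icc (0:ℝ) Tt, HasDerivAt z (z' t) t)
    (hε : ∀ t ∈ Icc (0:ℝ) Tt, |z' t - c| ≤ ε) :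
    |z Tt - z 0 - c * Tt| ≤ ε * Tt := by
  have key := (convex_Icc (0:ℝ) Tt).norm_image_sub_le_of_norm_hasDerivWithin_le
    (f := fun t => z t - c * t) (f' := fun t => z' t - c)
    (fun t ht => ((hz t ht).sub (by simpa using (hasDerivAt_id t).const_mul c)).hasDerivWithinAt)
    (fun t ht => by rw [Real.norm_eq_abs]; exact hε t ht)
    ⟨le_rfl, hT⟩ ⟨hT, le_rfl⟩
  have h1 : z Tt - c * Tt - (z 0 - c * 0) = z Tt - z 0 - c * Tt := by ring
  rw [Real.norm_eq_abs, Real.norm_eq_abs, h1, sub_zero, abs_of_nonneg hT] at key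
  exact key

set_option maxHeartbeats 2000000 in

/-- **Lemma (one hysteretic cycle approximates the Filippov flow to order `α²`).**
In the normalized setting (`f⁺ ≡ 0`, `g⁺ ≡ −1`, bounds `0 < D < f⁻,g⁻ < C` on
`K = [−M,M]×[−α₁,α₁]`), there is a constant `L > 0`, uniform on `K`, such that for
every `x̄ ∈ [x₀−γ/2, x_F(T)+γ/2]` and `0 < α ≤ α₀` the following holds.  Let `T⁻` be
the time for the flow of `(f⁻,g⁻)` from `(x̄,−α)` to reach `y = α`, let
`S = T⁻ + 2α` be the duration of one hysteretic cycle (since `(f⁺,g⁺) = (0,−1)`, the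
second leg takes time `2α` and leaves `x` unchanged, so `x_h(S) = x⁻(T⁻)`), and let
`x̄_F` solve `ẋ = f⁻(x,0)/(1+g⁻(x,0))` with `x̄_F(0) = x̄`.
Then `|x_h(S) − x̄_F(S)| ≤ L α²`. -/
theorem hysteresis_one_cycle_error
    (f g : ℝ → ℝ → ℝ → ℝ)
    (hf : ContDiff ℝ (⊤ : ℕ∞) fun p : ℝ × ℝ × ℝ => f p.1 p.2.1 p.2.2)
    (hg : ContDiff ℝ (⊤ : ℕ∞) fun p : ℝ × ℝ × ℝ => g p.1 p.2.1 p.2.2)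
    (hfp : ∀ x y : ℝ, f x y 1 = 0) (hgp : ∀ x y : ℝ, g x y 1 = -1)
    (M α₁ C D : ℝ) (hM : 0 < M) (hα₁ : 0 < α₁) (hD : 0 < D) (hDC : D < C)
    (hbound : ∀ x y : ℝ, |x| ≤ M → |y| ≤ α₁ →
      D < f x y (-1) ∧ f x y (-1) < C ∧ D < g x y (-1) ∧ g x y (-1) < C)
    (T : ℝ) (hT : 0 < T)
    (x₀ : ℝ) (xF : ℝ → ℝ) (hxF0 : xF 0 = x₀)
    (hxF : ∀ t ∈ Icc (0 : ℝ) T,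
      HasDerivAt xF (f (xF t) 0 (-1) / (g (xF t) 0 (-1) + 1)) t)
    (hxFM : ∀ t ∈ Icc (0 : ℝ) T, xF t ∈ Ioo (-M) M)
    (γ : ℝ) (hγ : 0 < γ)
    (hrect : -M ≤ x₀ - γ ∧ xF T + γ ≤ M)
    (α₀ : ℝ) (hα₀ : 0 < α₀ ∧ α₀ < min α₁ (D * γ / (4 * C))) :
    ∃ L > (0 : ℝ),
      ∀ xbar : ℝ, xbar ∈ Icc (x₀ - γ / 2) (xF T + γ / 2) →
      ∀ α : ℝ, 0 < α → α ≤ α₀ →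
      -- the first (lower) leg of the hysteretic cycle:
      ∀ (xm ym : ℝ → ℝ) (Tm : ℝ), 0 ≤ Tm →
        xm 0 = xbar → ym 0 = -α →
        (∀ t ∈ Icc (0 : ℝ) Tm,
          HasDerivAt xm (f (xm t) (ym t) (-1)) t ∧
          HasDerivAt ym (g (xm t) (ym t) (-1)) t ∧
          xm t ∈ Icc (x₀ - γ) (xF T + γ) ∧ ym t ∈ Icc (-α) α) →
        ym Tm = α → (∀ t ∈ Ico (0 : ℝ) Tm, ym t < α) →
      -- the Filippov solution started at x̄, defined up to the cycle time S = T⁻ + 2α: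
      ∀ xbarF : ℝ → ℝ, xbarF 0 = xbar →
        (∀ t ∈ Icc (0 : ℝ) (Tm + 2 * α),
          HasDerivAt xbarF (f (xbarF t) 0 (-1) / (1 + g (xbarF t) 0 (-1))) t) →
        |xm Tm - xbarF (Tm + 2 * α)| ≤ L * α ^ 2 := by
  obtain ⟨hα₀pos, hα₀lt⟩ := hα₀
  have hC : 0 < C := hD.trans hDC
  have hα₀α₁ : α₀ < α₁ := lt_of_lt_of_le hα₀lt (min_le_left _ _)
  have hα₀γ : α₀ < D * γ / (4 * C) := lt_of_lt_of_le hα₀lt (min_le_right _ _)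
  -- the compact region
  set R : Set (ℝ × ℝ) := Icc (-M) M ×ˢ Icc (-α₁) α₁ with hRdef
  have hRconv : Convex ℝ R := (convex_Icc _ _).prod (convex_Icc _ _)
  have hRcomp : IsCompact R := isCompact_Icc.prod isCompact_Icc
  have hmemR : ∀ x y : ℝ, |x| ≤ M → |y| ≤ α₁ → (x, y) ∈ R := by
    intro x y hx hy
    exact ⟨abs_le.mp hx |>.imp id id |> fun h => ⟨h.1, h.2⟩, abs_le.mp hy⟩
  -- Lipschitz constants for f⁻ and g⁻ on R
  have hφf : ContDiff ℝ (⊤ : ℕ∞) (fun p : ℝ × ℝ => f p.1 p.2 (-1)) := by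
    have : (fun p : ℝ × ℝ => f p.1 p.2 (-1)) =
        (fun q : ℝ × ℝ × ℝ => f q.1 q.2.1 q.2.2) ∘ (fun p : ℝ × ℝ => (p.1, p.2, (-1:ℝ))) := rfl
    rw [this]
    exact hf.comp (by fun_prop)
  have hφg : ContDiff ℝ (⊤ : ℕ∞) (fun p : ℝ × ℝ => g p.1 p.2 (-1)) := by
    have : (fun p : ℝ × ℝ => g p.1 p.2 (-1)) =
        (fun q : ℝ × ℝ × ℝ => g q.1 q.2.1 q.2.2) ∘ (fun p : ℝ × ℝ => (p.1, p.2, (-1:ℝ))) := rfl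
    rw [this]
    exact hg.comp (by fun_prop)
  obtain ⟨Kf, hKf0, hKf⟩ := hysteresis_exists_lip _ hφf R hRconv hRcomp
  obtain ⟨Kg, hKg0, hKg⟩ := hysteresis_exists_lip _ hφg R hRconv hRcomp
  set c₁ : ℝ := 2 * C / D + 1 with hc₁def
  set c₃ : ℝ := 2 / D + 2 with hc₃def
  set KF : ℝ := Kf * (1 + C) + C * Kg with hKFdef
  have hc₁pos : 0 < c₁ := by positivity
  have hc₃pos : 0 < c₃ := by positivity
  have hKF0 : 0 ≤ KF := by positivity
  refine ⟨1 + Kf * c₁ * (2 / D) + C * (Kg * c₁ * (2 / D)) + KF * (2 * C / D) * c₃,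
    by positivity, ?_⟩
  intro xbar hxbar α hαpos hαα₀ xm ym Tm hTm0 hxm0 hym0 hm hymTm hylt xbarF hxbarF0 hxbarF
  set S : ℝ := Tm + 2 * α with hSdef
  have hS0 : 0 ≤ S := by
    have : 0 < 2 * α := by linarith
    simp only [hSdef]; linarith
  have hαα₁ : α ≤ α₁ := le_of_lt (lt_of_le_of_lt hαα₀ hα₀α₁)
  -- membership of the lower-leg trajectory in R
  have hxmM : ∀ t ∈ Icc (0:ℝ) Tm, |xm t| ≤ M := by
    intro t ht
    have h1 := (hm t ht).2.2.1
    rw [abs_le]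
    exact ⟨le_trans hrect.1 h1.1, le_trans h1.2 hrect.2⟩
  have hymα₁ : ∀ t ∈ Icc (0:ℝ) Tm, |ym t| ≤ α₁ := by
    intro t ht
    have h1 := (hm t ht).2.2.2
    rw [abs_le]
    exact ⟨le_trans (by linarith) h1.1, le_trans h1.2 hαα₁⟩
  have h0mem : (0:ℝ) ∈ Icc (0:ℝ) Tm := ⟨le_rfl, hTm0⟩
  have hxbarM : |xbar| ≤ M := by rw [← hxm0]; exact hxmM 0 h0mem
  have h0α₁ : |(0:ℝ)| ≤ α₁ := by simpa using hα₁.le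
  -- pointwise bounds along the trajectory
  have hbnds : ∀ t ∈ Icc (0:ℝ) Tm,
      D < f (xm t) (ym t) (-1) ∧ f (xm t) (ym t) (-1) < C ∧
      D < g (xm t) (ym t) (-1) ∧ g (xm t) (ym t) (-1) < C :=
    fun t ht => hbound _ _ (hxmM t ht) (hymα₁ t ht)
  set a : ℝ := f xbar 0 (-1) with hadef
  set b : ℝ := g xbar 0 (-1) with hbdef
  obtain ⟨haD, haC, hbD, hbC⟩ := hbound xbar 0 hxbarM h0α₁
  -- T⁻ ≤ 2α/D
  have hDTm : D * Tm ≤ 2 * α := by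
    have hcont : ContinuousOn ym (Icc 0 Tm) :=
      fun t ht => ((hm t ht).2.1).continuousAt.continuousWithinAt
    have hdiff : DifferentiableOn ℝ ym (interior (Icc (0:ℝ) Tm)) := by
      rw [interior_Icc]
      exact fun t ht =>
        ((hm t (Ioo_subset_Icc_self ht)).2.1).differentiableAt.differentiableWithinAt
    have hderivge : ∀ t ∈ interior (Icc (0:ℝ) Tm), D ≤ deriv ym t := by
      rw [interior_Icc]
      intro t ht
      have h1 := (hm t (Ioo_subset_Icc_self ht)).2.1
      rw [h1.deriv]
      exact (hbnds t (Ioo_subset_Icc_self ht)).2.2.1.le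
    have key := (convex_Icc (0:ℝ) Tm).mul_sub_le_image_sub_of_le_deriv hcont hdiff hderivge
      0 h0mem Tm ⟨hTm0, le_rfl⟩ hTm0
    rw [hym0, hymTm] at key
    linarith
  have hTm2 : Tm ≤ 2 * α / D := by
    rw [le_div_iff₀ hD]; linarith [mul_comm D Tm]
  -- displacement of xm
  have hxmdisp : ∀ t ∈ Icc (0:ℝ) Tm, |xm t - xbar| ≤ C * t := by
    intro t ht
    have key := hysteresis_drift_bound (z := xm) (z' := fun u => f (xm u) (ym u) (-1))
      (c := 0) (ε := C) (Tt := t) ht.1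
      (fun u hu => (hm u ⟨hu.1, hu.2.trans ht.2⟩).1)
      (fun u hu => by
        have h1 := hbnds u ⟨hu.1, hu.2.trans ht.2⟩
        rw [sub_zero, abs_of_pos (hD.trans h1.1)]
        exact h1.2.1.le)
    rw [zero_mul, sub_zero] at key
    simpa [hxm0] using key
  -- distance to (xbar, 0) along the trajectory
  have hdist : ∀ t ∈ Icc (0:ℝ) Tm, dist ((xm t, ym t) : ℝ × ℝ) ((xbar, 0) : ℝ × ℝ) ≤ c₁ * α := by
    intro t ht
    rw [Prod.dist_eq]
    have hc₁α : c₁ * α = 2 * C / D * α + α := by rw [hc₁def]; ring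
    have h1 : dist (xm t) xbar ≤ c₁ * α := by
      have h3 : C * t ≤ C * (2 * α / D) :=
        mul_le_mul_of_nonneg_left (le_trans ht.2 hTm2) hC.le
      have h4 : C * (2 * α / D) = 2 * C / D * α := by ring
      calc dist (xm t) xbar = |xm t - xbar| := Real.dist_eq _ _
        _ ≤ C * t := hxmdisp t ht
        _ ≤ c₁ * α := by rw [hc₁α]; linarith
    have h2 : dist (ym t) 0 ≤ c₁ * α := by
      rw [Real.dist_eq, sub_zero]
      have h3 := (hm t ht).2.2.2
      have h5 : |ym t| ≤ α := abs_le.mpr ⟨h3.1, h3.2⟩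
      have h6 : (0:ℝ) ≤ 2 * C / D * α := by positivity
      rw [hc₁α] at *
      linarith
    exact max_le h1 h2
  -- P1 : first-order expansion of the x-component
  have hP1 : |xm Tm - xbar - a * Tm| ≤ Kf * c₁ * (2 / D) * α ^ 2 := by
    have key := hysteresis_drift_bound (z := xm) (z' := fun u => f (xm u) (ym u) (-1))
      (c := a) (ε := Kf * (c₁ * α)) (Tt := Tm) hTm0
      (fun u hu => (hm u hu).1)
      (fun u hu => by
        have h1 := hKf (xm u, ym u) ⟨abs_le.mp (hxmM u hu), abs_le.mp (hymα₁ u hu)⟩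
          (xbar, 0) ⟨abs_le.mp hxbarM, abs_le.mp h0α₁⟩
        exact h1.trans (mul_le_mul_of_nonneg_left (hdist u hu) hKf0))
    rw [hxm0] at key
    calc |xm Tm - xbar - a * Tm| ≤ Kf * (c₁ * α) * Tm := key
      _ ≤ Kf * (c₁ * α) * (2 * α / D) :=
          mul_le_mul_of_nonneg_left hTm2 (mul_nonneg hKf0 (mul_nonneg hc₁pos.le hαpos.le))
      _ = Kf * c₁ * (2 / D) * α ^ 2 := by ring
  -- P2 : first-order expansion of the y-component
  have hP2 : |b * Tm - 2 * α| ≤ Kg * c₁ * (2 / D) * α ^ 2 := by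
    have key := hysteresis_drift_bound (z := ym) (z' := fun u => g (xm u) (ym u) (-1))
      (c := b) (ε := Kg * (c₁ * α)) (Tt := Tm) hTm0
      (fun u hu => (hm u hu).2.1)
      (fun u hu => by
        have h1 := hKg (xm u, ym u) ⟨abs_le.mp (hxmM u hu), abs_le.mp (hymα₁ u hu)⟩
          (xbar, 0) ⟨abs_le.mp hxbarM, abs_le.mp h0α₁⟩
        exact h1.trans (mul_le_mul_of_nonneg_left (hdist u hu) hKg0))
    rw [hym0, hymTm] at key
    have h2 : α - -α - b * Tm = -(b * Tm - 2 * α) := by ring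
    rw [h2, abs_neg] at key
    calc |b * Tm - 2 * α| ≤ Kg * (c₁ * α) * Tm := key
      _ ≤ Kg * (c₁ * α) * (2 * α / D) :=
          mul_le_mul_of_nonneg_left hTm2 (mul_nonneg hKg0 (mul_nonneg hc₁pos.le hαpos.le))
      _ = Kg * c₁ * (2 / D) * α ^ 2 := by ring
  -- bound on S
  have hSle : S ≤ c₃ * α := by
    rw [hSdef, hc₃def]
    have h1 : 2 * α / D = 2 / D * α := by ring
    have h2 : ((2:ℝ) / D + 2) * α = 2 / D * α + 2 * α := by ring
    linarith
  -- speed bound for the Filippov field at admissible points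
  have hspeed : ∀ x : ℝ, |x| ≤ M → |f x 0 (-1) / (1 + g x 0 (-1))| ≤ C / (1 + D) := by
    intro x hx
    obtain ⟨h1, h2, h3, h4⟩ := hbound x 0 hx h0α₁
    have hpos : 0 < 1 + g x 0 (-1) := by linarith
    rw [abs_of_nonneg (div_nonneg (by linarith) (by linarith))]
    exact div_le_div₀ hC.le h2.le (by linarith) (by linarith)
  have hCD1 : (0:ℝ) < C / (1 + D) := by positivity
  have hCDc₃ : C / (1 + D) * (c₃ * α) = 2 * C / D * α := by
    rw [hc₃def]
    field_simp
  have h2CDα₀ : 2 * C / D * α₀ < γ / 2 := by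
    have h1 : 2 * C / D * α₀ < 2 * C / D * (D * γ / (4 * C)) := by
      apply mul_lt_mul_of_pos_left hα₀γ (by positivity)
    have h2 : 2 * C / D * (D * γ / (4 * C)) = γ / 2 := by
      field_simp
      ring
    linarith
  have h2CDα : 2 * C / D * α ≤ 2 * C / D * α₀ :=
    mul_le_mul_of_nonneg_left hαα₀ (by positivity)
  -- MVT step for the Filippov solution on a subinterval where it stays in the region
  have hmvt : ∀ t₀ ∈ Icc (0:ℝ) S, (∀ u ∈ Icc (0:ℝ) t₀, |xbarF u - xbar| ≤ γ / 2) →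
      ∀ u ∈ Icc (0:ℝ) t₀, |xbarF u - xbar| ≤ 2 * C / D * α := by
    intro t₀ ht₀ hreg u hu
    have hregM : ∀ w ∈ Icc (0:ℝ) t₀, |xbarF w| ≤ M := by
      intro w hw
      have h1 := abs_le.mp (hreg w hw)
      rw [abs_le]
      constructor
      · linarith [hxbar.1, hrect.1]
      · linarith [hxbar.2, hrect.2]
    have key := hysteresis_drift_bound (z := xbarF)
      (z' := fun w => f (xbarF w) 0 (-1) / (1 + g (xbarF w) 0 (-1)))
      (c := 0) (ε := C / (1 + D)) (Tt := u) hu.1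
      (fun w hw => hxbarF w ⟨hw.1, le_trans (hw.2.trans hu.2) ht₀.2⟩)
      (fun w hw => by
        rw [sub_zero]
        exact hspeed _ (hregM w ⟨hw.1, hw.2.trans hu.2⟩))
    rw [zero_mul, sub_zero, hxbarF0] at key
    have h5 : C / (1 + D) * u ≤ C / (1 + D) * (c₃ * α) := by
      apply mul_le_mul_of_nonneg_left _ hCD1.le
      exact le_trans (hu.2.trans ht₀.2) hSle
    rw [hCDc₃] at h5
    linarith [key]
  -- bootstrap: the Filippov solution stays within γ/2 of xbar
  have hFreg : ∀ t ∈ Icc (0:ℝ) S, |xbarF t - xbar| ≤ γ / 2 := by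
    by_contra hcon
    push_neg at hcon
    obtain ⟨t₁, ht₁, hgt⟩ := hcon
    set A : Set ℝ := {t | t ∈ Icc (0:ℝ) S ∧ γ / 2 ≤ |xbarF t - xbar|} with hAdef
    have hA_ne : A.Nonempty := ⟨t₁, ht₁, hgt.le⟩
    have hcontF : ContinuousOn (fun t => |xbarF t - xbar|) (Icc 0 S) := fun t ht =>
      (((hxbarF t ht).continuousAt.sub continuousAt_const).abs).continuousWithinAt
    have hAclosed : IsClosed A := by
      have : A = Icc (0:ℝ) S ∩ (fun t => |xbarF t - xbar|) ⁻¹' Ici (γ / 2) := by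
        ext t; simp [hAdef, and_comm]
      rw [this]
      exact hcontF.preimage_isClosed_of_isClosed isClosed_Icc isClosed_Ici
    have hAbdd : BddBelow A := ⟨0, fun t ht => ht.1.1⟩
    set t₀ : ℝ := sInf A with ht₀def
    have ht₀A : t₀ ∈ A := hAclosed.csInf_mem hA_ne hAbdd
    have ht₀S : t₀ ∈ Icc (0:ℝ) S := ht₀A.1
    have ht₀ge : γ / 2 ≤ |xbarF t₀ - xbar| := ht₀A.2
    have ht₀pos : 0 < t₀ := by
      rcases eq_or_lt_of_le ht₀S.1 with h | h
      · exfalso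
        rw [← h, hxbarF0, sub_self, abs_zero] at ht₀ge
        linarith
      · exact h
    have hlt : ∀ u ∈ Ico (0:ℝ) t₀, |xbarF u - xbar| < γ / 2 := by
      intro u hu
      by_contra h
      push_neg at h
      have : u ∈ A := ⟨⟨hu.1, hu.2.le.trans ht₀S.2⟩, h⟩
      exact absurd (csInf_le hAbdd this) (not_le.mpr hu.2)
    have ht₀le : ∀ u ∈ Icc (0:ℝ) t₀, |xbarF u - xbar| ≤ γ / 2 := by
      intro u hu
      rcases lt_or_eq_of_le hu.2 with h | h
      · exact (hlt u ⟨hu.1, h⟩).le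
      · rw [h]
        have hne : (nhdsWithin t₀ (Ico (0:ℝ) t₀)).NeBot := by
          rw [← mem_closure_iff_nhdsWithin_neBot, closure_Ico (ne_of_lt ht₀pos)]
          exact ⟨ht₀pos.le, le_rfl⟩
        have hca : ContinuousWithinAt (fun w => |xbarF w - xbar|) (Ico (0:ℝ) t₀) t₀ :=
          (((hxbarF t₀ ht₀S).continuousAt.sub continuousAt_const).abs).continuousWithinAt
        haveI := hne
        exact le_of_tendsto hca (Filter.eventually_of_mem self_mem_nhdsWithin
          (fun w hw => (hlt w hw).le))
    have hfin := hmvt t₀ ht₀S ht₀le t₀ ⟨ht₀pos.le, le_rfl⟩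
    have : |xbarF t₀ - xbar| < γ / 2 := by linarith
    linarith
  -- displacement of the Filippov solution
  have hFdisp : ∀ t ∈ Icc (0:ℝ) S, |xbarF t - xbar| ≤ 2 * C / D * α :=
    hmvt S ⟨hS0, le_rfl⟩ hFreg
  have hFregM : ∀ t ∈ Icc (0:ℝ) S, |xbarF t| ≤ M := by
    intro t ht
    have h1 := abs_le.mp (hFreg t ht)
    rw [abs_le]
    constructor
    · linarith [hxbar.1, hrect.1]
    · linarith [hxbar.2, hrect.2]
  -- Lipschitz bound for the Filippov vector field
  have hFlip : ∀ x x' : ℝ, |x| ≤ M → |x'| ≤ M →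
      |f x 0 (-1) / (1 + g x 0 (-1)) - f x' 0 (-1) / (1 + g x' 0 (-1))| ≤ KF * |x - x'| := by
    intro x x' hx hx'
    obtain ⟨hu1, hu2, hv1, hv2⟩ := hbound x 0 hx h0α₁
    obtain ⟨hu1', hu2', hv1', hv2'⟩ := hbound x' 0 hx' h0α₁
    have hdxx : dist ((x, 0) : ℝ × ℝ) ((x', 0) : ℝ × ℝ) = |x - x'| := by
      rw [Prod.dist_eq, Real.dist_eq, Real.dist_eq]
      simp [abs_nonneg]
    have hfu : |f x 0 (-1) - f x' 0 (-1)| ≤ Kf * |x - x'| := by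
      have h1 := hKf (x, 0) ⟨abs_le.mp hx, abs_le.mp h0α₁⟩ (x', 0) ⟨abs_le.mp hx', abs_le.mp h0α₁⟩
      rwa [hdxx] at h1
    have hgv : |g x 0 (-1) - g x' 0 (-1)| ≤ Kg * |x - x'| := by
      have h1 := hKg (x, 0) ⟨abs_le.mp hx, abs_le.mp h0α₁⟩ (x', 0) ⟨abs_le.mp hx', abs_le.mp h0α₁⟩
      rwa [hdxx] at h1
    have hv0 : (1:ℝ) + g x 0 (-1) ≠ 0 := by linarith
    have hv0' : (1:ℝ) + g x' 0 (-1) ≠ 0 := by linarith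
    rw [div_sub_div _ _ hv0 hv0', abs_div]
    have hnum : |f x 0 (-1) * (1 + g x' 0 (-1)) - (1 + g x 0 (-1)) * f x' 0 (-1)| ≤
        KF * |x - x'| := by
      have heq : f x 0 (-1) * (1 + g x' 0 (-1)) - (1 + g x 0 (-1)) * f x' 0 (-1) =
          (f x 0 (-1) - f x' 0 (-1)) * (1 + g x' 0 (-1)) +
          f x' 0 (-1) * (g x' 0 (-1) - g x 0 (-1)) := by ring
      rw [heq]
      calc |(f x 0 (-1) - f x' 0 (-1)) * (1 + g x' 0 (-1)) +
            f x' 0 (-1) * (g x' 0 (-1) - g x 0 (-1))|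
          ≤ |(f x 0 (-1) - f x' 0 (-1)) * (1 + g x' 0 (-1))| +
            |f x' 0 (-1) * (g x' 0 (-1) - g x 0 (-1))| := abs_add_le _ _
        _ = |f x 0 (-1) - f x' 0 (-1)| * |1 + g x' 0 (-1)| +
            |f x' 0 (-1)| * |g x' 0 (-1) - g x 0 (-1)| := by rw [abs_mul, abs_mul]
        _ ≤ (Kf * |x - x'|) * (1 + C) + C * (Kg * |x - x'|) := by
            have e1 : |1 + g x' 0 (-1)| ≤ 1 + C := by
              rw [abs_of_pos (by linarith)]; linarith
            have e2 : |f x' 0 (-1)| ≤ C := by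
              rw [abs_of_pos (by linarith)]; linarith
            have e3 : |g x' 0 (-1) - g x 0 (-1)| ≤ Kg * |x - x'| := by
              rw [abs_sub_comm]; exact hgv
            have e6 : |f x 0 (-1) - f x' 0 (-1)| * |1 + g x' 0 (-1)| ≤
                (Kf * |x - x'|) * (1 + C) :=
              mul_le_mul hfu e1 (abs_nonneg _) (by positivity)
            have e7 : |f x' 0 (-1)| * |g x' 0 (-1) - g x 0 (-1)| ≤ C * (Kg * |x - x'|) :=
              mul_le_mul e2 e3 (abs_nonneg _) hC.le
            linarith
        _ = KF * |x - x'| := by rw [hKFdef]; ring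
    have hden : (1:ℝ) ≤ |(1 + g x 0 (-1)) * (1 + g x' 0 (-1))| := by
      rw [abs_of_pos (mul_pos (by linarith) (by linarith))]
      calc (1:ℝ) = 1 * 1 := by ring
        _ ≤ (1 + g x 0 (-1)) * (1 + g x' 0 (-1)) :=
          mul_le_mul (by linarith) (by linarith) (by norm_num) (by linarith)
    calc |f x 0 (-1) * (1 + g x' 0 (-1)) - (1 + g x 0 (-1)) * f x' 0 (-1)| /
          |(1 + g x 0 (-1)) * (1 + g x' 0 (-1))|
        ≤ |f x 0 (-1) * (1 + g x' 0 (-1)) - (1 + g x 0 (-1)) * f x' 0 (-1)| :=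
          div_le_self (abs_nonneg _) hden
      _ ≤ KF * |x - x'| := hnum
  -- P3 : first-order expansion of the Filippov solution
  set Fb : ℝ := a / (1 + b) with hFbdef
  have hP3 : |xbarF S - xbar - Fb * S| ≤ KF * (2 * C / D) * c₃ * α ^ 2 := by
    have key := hysteresis_drift_bound (z := xbarF)
      (z' := fun w => f (xbarF w) 0 (-1) / (1 + g (xbarF w) 0 (-1)))
      (c := Fb) (ε := KF * (2 * C / D * α)) (Tt := S) hS0
      hxbarF
      (fun w hw => by
        have h1 := hFlip (xbarF w) xbar (hFregM w hw) hxbarM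
        rw [← hadef, ← hbdef, ← hFbdef] at h1
        exact h1.trans (mul_le_mul_of_nonneg_left (hFdisp w hw) hKF0))
    rw [hxbarF0] at key
    calc |xbarF S - xbar - Fb * S| ≤ KF * (2 * C / D * α) * S := key
      _ ≤ KF * (2 * C / D * α) * (c₃ * α) :=
          mul_le_mul_of_nonneg_left hSle (mul_nonneg hKF0 (by positivity))
      _ = KF * (2 * C / D) * c₃ * α ^ 2 := by ring
  -- the exact algebraic identity
  have h1b : (1:ℝ) + b ≠ 0 := by linarith
  have hid : xm Tm - xbarF S =
      (xm Tm - xbar - a * Tm) + Fb * (b * Tm - 2 * α) - (xbarF S - xbar - Fb * S) := by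
    have hkey : Fb * (b * Tm - 2 * α) = a * Tm - Fb * S := by
      rw [hFbdef, hSdef]
      field_simp
      ring
    rw [hkey]; ring
  -- |Fb| ≤ C
  have hFbC : |Fb| ≤ C := by
    rw [hFbdef, abs_of_nonneg (div_nonneg (by linarith) (by linarith))]
    calc a / (1 + b) ≤ a / 1 := by
          apply div_le_div_of_nonneg_left (by linarith) one_pos
          linarith
      _ = a := div_one a
      _ ≤ C := haC.le
  -- assemble
  rw [hid]
  calc |(xm Tm - xbar - a * Tm) + Fb * (b * Tm - 2 * α) - (xbarF S - xbar - Fb * S)|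
      ≤ |xm Tm - xbar - a * Tm| + |Fb * (b * Tm - 2 * α)| + |xbarF S - xbar - Fb * S| := by
        calc |(xm Tm - xbar - a * Tm) + Fb * (b * Tm - 2 * α) - (xbarF S - xbar - Fb * S)|
            ≤ |(xm Tm - xbar - a * Tm) + Fb * (b * Tm - 2 * α)| + |xbarF S - xbar - Fb * S| :=
              abs_sub _ _
          _ ≤ |xm Tm - xbar - a * Tm| + |Fb * (b * Tm - 2 * α)| + |xbarF S - xbar - Fb * S| := by
              linarith [abs_add_le (xm Tm - xbar - a * Tm) (Fb * (b * Tm - 2 * α))]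
    _ ≤ Kf * c₁ * (2 / D) * α ^ 2 + C * (Kg * c₁ * (2 / D) * α ^ 2) +
        KF * (2 * C / D) * c₃ * α ^ 2 := by
        have h2 : |Fb * (b * Tm - 2 * α)| ≤ C * (Kg * c₁ * (2 / D) * α ^ 2) := by
          rw [abs_mul]
          exact mul_le_mul hFbC hP2 (abs_nonneg _) hC.le
        linarith [hP1, hP3]
    _ ≤ (1 + Kf * c₁ * (2 / D) + C * (Kg * c₁ * (2 / D)) + KF * (2 * C / D) * c₃) * α ^ 2 := by
        have h9 : (0:ℝ) ≤ α ^ 2 := sq_nonneg α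
        have h10 : (1 + Kf * c₁ * (2 / D) + C * (Kg * c₁ * (2 / D)) + KF * (2 * C / D) * c₃) *
            α ^ 2 = α ^ 2 + Kf * c₁ * (2 / D) * α ^ 2 + C * (Kg * c₁ * (2 / D) * α ^ 2) +
            KF * (2 * C / D) * c₃ * α ^ 2 := by ring
        linarith
end

section
/- Consider the Filippov solution x_F(t), 0 ≤ t ≤ T, with x_F(0) = x₀, and the hysteretic solution (x_h(t), y_h(t)) with initial condition (x₀, −α). Let n = n(α) be the number of hysteretic cycles such that x_n ≤ x_F(T) ≤ x_{n+1}, where x_i is the x-coordinate at the end of the i-th cycle. Then there exist positive constants L₁, L₂ (independent of α) such that for all 0 < α ≤ α₀: n(α) ≤ (x_F(T) − x₀)/(L₂ D α) and n(α) + 1 > (x_F(T) − x₀)/(L₁ C α); in particular n(α) = O(1/α) uniformly in α. -/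
open Set

lemma incr_le {h h' : ℝ → ℝ} {b K : ℝ} (hb : 0 ≤ b)
    (hd : ∀ t ∈ Icc (0:ℝ) b, HasDerivAt h (h' t) t)
    (hK : ∀ t ∈ Icc (0:ℝ) b, h' t ≤ K) :
    h b - h 0 ≤ K * b := by
  set φ : ℝ → ℝ := fun t => K * t - h t with hφ
  have hmono : MonotoneOn φ (Icc 0 b) := by
    apply monotoneOn_of_hasDerivWithinAt_nonneg (f' := fun t => K - h' t)
      (convex_Icc 0 b)
    · intro t ht
      exact (((hasDerivAt_id t).const_mul K).sub (hd t ht)).continuousAt.continuousWithinAt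
    · intro t ht
      have ht' : t ∈ Icc (0:ℝ) b := interior_subset ht
      exact (((hasDerivAt_id t).const_mul K).sub (hd t ht')).hasDerivWithinAt.congr_deriv
        (by ring)
    · intro t ht
      have ht' : t ∈ Icc (0:ℝ) b := interior_subset ht
      linarith [hK t ht']
  have := hmono (left_mem_Icc.2 hb) (right_mem_Icc.2 hb) hb
  simp only [hφ, mul_zero] at this
  linarith

lemma incr_ge {h h' : ℝ → ℝ} {b K : ℝ} (hb : 0 ≤ b)
    (hd : ∀ t ∈ Icc (0:ℝ) b, HasDerivAt h (h' t) t)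
    (hK : ∀ t ∈ Icc (0:ℝ) b, K ≤ h' t) :
    K * b ≤ h b - h 0 := by
  have := incr_le (h := fun t => -h t) (h' := fun t => -h' t) (K := -K) hb
    (fun t ht => (hd t ht).neg) (fun t ht => neg_le_neg (hK t ht))
  simp at this
  linarith


set_option maxHeartbeats 1000000 in
/-- **Lemma (number of hysteretic cycles).**
In the normalized setting (`f⁺ ≡ 0`, `g⁺ ≡ −1`, bounds `0 < D < f⁻,g⁻ < C` on
`K = [−M,M]×[−α₁,α₁]`), consider the Filippov solution `x_F` on `[0,T]` with
`x_F(0) = x₀`, and the hysteretic solution starting at `(x₀,−α)`: `X i` is the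
`x`-coordinate at the end of the `i`-th cycle (the lower leg from `(X i, −α)` reaches
`y = α` after time `Tm i` at `x`-value `X (i+1)`; the upper leg leaves `x` unchanged).
If `n = n(α)` is the number of cycles with `X n ≤ x_F(T) ≤ X (n+1)`, then there exist
constants `L₁, L₂ > 0` independent of `α` such that for all `0 < α ≤ α₀`:
`n ≤ (x_F(T) − x₀)/(L₂ D α)` and `n + 1 > (x_F(T) − x₀)/(L₁ C α)`;
in particular `n(α) = O(1/α)` uniformly in `α`. -/
theorem hysteresis_number_of_cycles
    (f g : ℝ → ℝ → ℝ → ℝ)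
    (hf : ContDiff ℝ (⊤ : ℕ∞) fun p : ℝ × ℝ × ℝ => f p.1 p.2.1 p.2.2)
    (hg : ContDiff ℝ (⊤ : ℕ∞) fun p : ℝ × ℝ × ℝ => g p.1 p.2.1 p.2.2)
    (hfp : ∀ x y : ℝ, f x y 1 = 0) (hgp : ∀ x y : ℝ, g x y 1 = -1)
    (M α₁ C D : ℝ) (hM : 0 < M) (hα₁ : 0 < α₁) (hD : 0 < D) (hDC : D < C)
    (hbound : ∀ x y : ℝ, |x| ≤ M → |y| ≤ α₁ →
      D < f x y (-1) ∧ f x y (-1) < C ∧ D < g x y (-1) ∧ g x y (-1) < C)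
    (T : ℝ) (hT : 0 < T)
    (x₀ : ℝ) (xF : ℝ → ℝ) (hxF0 : xF 0 = x₀)
    (hxF : ∀ t ∈ Icc (0 : ℝ) T,
      HasDerivAt xF (f (xF t) 0 (-1) / (g (xF t) 0 (-1) + 1)) t)
    (hxFM : ∀ t ∈ Icc (0 : ℝ) T, xF t ∈ Ioo (-M) M)
    (γ : ℝ) (hγ : 0 < γ)
    (hrect : -M ≤ x₀ - γ ∧ xF T + γ ≤ M)
    (α₀ : ℝ) (hα₀ : 0 < α₀ ∧ α₀ < min α₁ (D * γ / (4 * C))) :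
    ∃ L₁ > (0 : ℝ), ∃ L₂ > (0 : ℝ),
      ∀ α : ℝ, 0 < α → α ≤ α₀ →
      ∀ (X : ℕ → ℝ) (Tm : ℕ → ℝ) (n : ℕ),
        X 0 = x₀ →
        -- each cycle: the lower leg from (X i, −α) reaches y = α after time Tm i at X (i+1)
        (∀ i : ℕ, i ≤ n →
          ∃ xm ym : ℝ → ℝ,
            xm 0 = X i ∧ ym 0 = -α ∧ 0 ≤ Tm i ∧
            (∀ t ∈ Icc (0 : ℝ) (Tm i),
              HasDerivAt xm (f (xm t) (ym t) (-1)) t ∧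
              HasDerivAt ym (g (xm t) (ym t) (-1)) t ∧
              xm t ∈ Icc (x₀ - γ) (xF T + γ) ∧ ym t ∈ Icc (-α) α) ∧
            ym (Tm i) = α ∧ (∀ t ∈ Ico (0 : ℝ) (Tm i), ym t < α) ∧
            xm (Tm i) = X (i + 1)) →
        X n ≤ xF T → xF T ≤ X (n + 1) →
        (n : ℝ) ≤ (xF T - x₀) / (L₂ * D * α) ∧
        (xF T - x₀) / (L₁ * C * α) < (n : ℝ) + 1 := by
  have hC : 0 < C := hD.trans hDC
  refine ⟨4 / D, by positivity, 2 / C, by positivity, ?_⟩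
  intro α hα hαα₀ X Tm n hX0 hcyc hXn hXn1
  have hαα₁ : α < α₁ := lt_of_le_of_lt hαα₀ (lt_of_lt_of_le hα₀.2 (min_le_left _ _))
  have key : ∀ i ≤ n, 2 * D * α ≤ C * (X (i+1) - X i) ∧ D * (X (i+1) - X i) ≤ 2 * C * α := by
    intro i hi
    obtain ⟨xm, ym, hxm0, hym0, hTm0, hflow, hymT, -, hxmT⟩ := hcyc i hi
    have hb : ∀ t ∈ Icc (0:ℝ) (Tm i),
        D < f (xm t) (ym t) (-1) ∧ f (xm t) (ym t) (-1) < C ∧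
        D < g (xm t) (ym t) (-1) ∧ g (xm t) (ym t) (-1) < C := by
      intro t ht
      obtain ⟨-, -, hx, hy⟩ := hflow t ht
      apply hbound
      · rw [abs_le]
        exact ⟨by linarith [hx.1, hrect.1], by linarith [hx.2, hrect.2]⟩
      · rw [abs_le]
        exact ⟨by linarith [hy.1], by linarith [hy.2]⟩
    have hglo : D * Tm i ≤ ym (Tm i) - ym 0 :=
      incr_ge hTm0 (fun t ht => (hflow t ht).2.1) (fun t ht => (hb t ht).2.2.1.le)
    have hghi : ym (Tm i) - ym 0 ≤ C * Tm i :=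
      incr_le hTm0 (fun t ht => (hflow t ht).2.1) (fun t ht => (hb t ht).2.2.2.le)
    have hxlo : D * Tm i ≤ xm (Tm i) - xm 0 :=
      incr_ge hTm0 (fun t ht => (hflow t ht).1) (fun t ht => (hb t ht).1.le)
    have hxhi : xm (Tm i) - xm 0 ≤ C * Tm i :=
      incr_le hTm0 (fun t ht => (hflow t ht).1) (fun t ht => (hb t ht).2.1.le)
    rw [hymT, hym0] at hglo hghi
    rw [hxmT, hxm0] at hxlo hxhi
    constructor
    · nlinarith
    · nlinarith
  have tele : ∀ m, m ≤ n + 1 →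
      (m : ℝ) * (2 * D * α) ≤ C * (X m - X 0) ∧ D * (X m - X 0) ≤ (m : ℝ) * (2 * C * α) := by
    intro m
    induction m with
    | zero => intro _; simp
    | succ m ih =>
      intro hm
      obtain ⟨h1, h2⟩ := ih (le_trans (Nat.le_succ m) hm)
      obtain ⟨k1, k2⟩ := key m (Nat.lt_succ_iff.mp hm)
      push_cast
      constructor <;> nlinarith
  obtain ⟨t1, -⟩ := tele n (Nat.le_succ n)
  obtain ⟨-, t2⟩ := tele (n + 1) le_rfl
  rw [hX0] at t1 t2
  push_cast at t2
  have hCα : 0 < C * α := mul_pos hC hα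
  constructor
  · rw [le_div_iff₀ (by positivity)]
    have hcx : C * (X n - x₀) ≤ C * (xF T - x₀) := by nlinarith
    have : (n : ℝ) * (2 / C * D * α) = (n : ℝ) * (2 * D * α) / C := by ring
    rw [this, div_le_iff₀ hC]
    nlinarith
  · rw [div_lt_iff₀ (by positivity)]
    have hdx : D * (xF T - x₀) ≤ D * (X (n + 1) - x₀) := by nlinarith
    have hn1 : (1 : ℝ) ≤ (n : ℝ) + 1 := by
      have := Nat.cast_nonneg (α := ℝ) n; linarith
    have heq : (((n : ℝ) + 1) * (4 / D * C * α)) * D = 2 * (((n : ℝ) + 1) * (2 * C * α)) := by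
      field_simp
      ring
    have h5 : 2 * C * α ≤ ((n : ℝ) + 1) * (2 * C * α) :=
      le_mul_of_one_le_left (by positivity) hn1
    have hlt : (xF T - x₀) * D < (((n : ℝ) + 1) * (4 / D * C * α)) * D := by
      rw [heq]
      nlinarith
    exact lt_of_mul_lt_mul_right hlt hD.le
end

section
/- Define the error at the i-th hysteretic cycle as ε_i = x_F(S(x₀) + S(x₁) + ⋯ + S(x_{i−1})) − x_i, where S(x_l) = T⁻(x_l) + 2α is the time of the l-th hysteretic cycle. Then there exists a constant L > 0, uniform on the compact K, such that for all 1 ≤ i ≤ n(α): |ε_i| ≤ (1 + Lα)|ε_{i−1}| + Lα². -/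
open Set

/-- Auxiliary arithmetic lemma used to conclude the error recursion. -/
theorem hysteresis_error_recursion_final_arith
    {LF C K2 cD tD L τ α E E' : ℝ}
    (hLF0 : 0 ≤ LF) (hK20 : 0 ≤ K2) (hC : 0 < C) (hα : 0 < α) (hE : 0 ≤ E)
    (hτ0 : 0 ≤ τ) (hτcd : τ + 2*α ≤ cD * α) (hτ2 : τ ≤ tD * α) (htD0 : 0 ≤ tD)
    (hL1 : LF * cD ≤ L) (hL2 : LF * C * cD^2 + K2 * tD ≤ L)
    (htri : E' ≤ E + LF * (C * (τ + 2*α) + E) * (τ + 2*α) + K2 * α * τ) :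
    E' ≤ (1 + L * α) * E + L * α^2 := by
  set u := τ + 2*α with hu
  have hu0 : 0 ≤ u := by rw [hu]; linarith
  have hcα : 0 ≤ cD * α := le_trans hu0 hτcd
  have h1 : LF * u * E ≤ LF * (cD * α) * E :=
    mul_le_mul_of_nonneg_right (mul_le_mul_of_nonneg_left hτcd hLF0) hE
  have h2 : LF * C * u^2 ≤ LF * C * (cD*α)^2 :=
    mul_le_mul_of_nonneg_left (pow_le_pow_left₀ hu0 hτcd 2) (by positivity)
  have h3 : K2 * α * τ ≤ K2 * α * (tD * α) :=
    mul_le_mul_of_nonneg_left hτ2 (by positivity)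
  have hexp : LF * (C * u + E) * u = LF * C * u^2 + LF * u * E := by ring
  have hL1' : LF * (cD*α) * E ≤ L * α * E := by
    have h4 : LF * cD * α ≤ L * α := mul_le_mul_of_nonneg_right hL1 hα.le
    calc LF * (cD*α) * E = (LF*cD*α) * E := by ring
    _ ≤ (L*α)*E := mul_le_mul_of_nonneg_right h4 hE
    _ = L*α*E := by ring
  have hL2' : LF * C * (cD*α)^2 + K2 * α * (tD*α) ≤ L * α^2 := by
    have h5 : (LF * C * cD^2 + K2 * tD) * α^2 ≤ L * α^2 :=
      mul_le_mul_of_nonneg_right hL2 (sq_nonneg α)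
    calc LF * C * (cD*α)^2 + K2 * α * (tD*α)
        = (LF * C * cD^2 + K2 * tD) * α^2 := by ring
    _ ≤ L * α^2 := h5
  calc E' ≤ E + LF * (C*u + E) * u + K2 * α * τ := htri
  _ = E + (LF * C * u^2 + LF * u * E) + K2*α*τ := by rw [hexp]
  _ ≤ E + (LF * C * (cD*α)^2 + L*α*E) + K2*α*(tD*α) := by linarith
  _ ≤ E + L*α*E + L*α^2 := by linarith
  _ = (1 + L*α)*E + L*α^2 := by ring

/-- **Lemma (error recursion for the hysteretic cycles).**
In the normalized setting (`f⁺ ≡ 0`, `g⁺ ≡ −1`, bounds `0 < D < f⁻,g⁻ < C` on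
`K = [−M,M]×[−α₁,α₁]`), consider the Filippov solution `x_F` with `x_F(0) = x₀` and
the hysteretic solution starting at `(x₀,−α)`; `X i` is the `x`-coordinate at the end
of the `i`-th cycle, `Tm i = T⁻(X i)` the duration of its lower leg, and
`Ssum i = S(x₀)+⋯+S(X (i−1))` (with `S(x_l) = Tm l + 2α`) the total elapsed time after
`i` cycles.  Define the error `ε_i = x_F(Ssum i) − X i`.  Then there exists a constant
`L > 0`, uniform on `K`, such that `|ε_i| ≤ (1 + Lα)|ε_{i−1}| + Lα²` for
`1 ≤ i ≤ n(α)`. -/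
theorem hysteresis_error_recursion
    (f g : ℝ → ℝ → ℝ → ℝ)
    (hf : ContDiff ℝ (⊤ : ℕ∞) fun p : ℝ × ℝ × ℝ => f p.1 p.2.1 p.2.2)
    (hg : ContDiff ℝ (⊤ : ℕ∞) fun p : ℝ × ℝ × ℝ => g p.1 p.2.1 p.2.2)
    (hfp : ∀ x y : ℝ, f x y 1 = 0) (hgp : ∀ x y : ℝ, g x y 1 = -1)
    (M α₁ C D : ℝ) (hM : 0 < M) (hα₁ : 0 < α₁) (hD : 0 < D) (hDC : D < C)
    (hbound : ∀ x y : ℝ, |x| ≤ M → |y| ≤ α₁ →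
      D < f x y (-1) ∧ f x y (-1) < C ∧ D < g x y (-1) ∧ g x y (-1) < C)
    (T : ℝ) (hT : 0 < T)
    (x₀ : ℝ) (xF : ℝ → ℝ) (hxF0 : xF 0 = x₀)
    (hxF : ∀ t ∈ Icc (0 : ℝ) T,
      HasDerivAt xF (f (xF t) 0 (-1) / (g (xF t) 0 (-1) + 1)) t)
    (hxFM : ∀ t ∈ Icc (0 : ℝ) T, xF t ∈ Ioo (-M) M)
    (γ : ℝ) (hγ : 0 < γ)
    (hrect : -M ≤ x₀ - γ ∧ xF T + γ ≤ M)
    (α₀ : ℝ) (hα₀ : 0 < α₀ ∧ α₀ < min α₁ (D * γ / (4 * C))) :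
    ∃ L > (0 : ℝ),
      ∀ α : ℝ, 0 < α → α ≤ α₀ →
      ∀ (X : ℕ → ℝ) (Tm : ℕ → ℝ) (Ssum : ℕ → ℝ) (n : ℕ),
        X 0 = x₀ →
        -- cumulative cycle times: Ssum i = Σ_{l<i} (Tm l + 2α)
        Ssum 0 = 0 → (∀ i : ℕ, Ssum (i + 1) = Ssum i + Tm i + 2 * α) →
        (∀ i : ℕ, i ≤ n → Ssum i ∈ Icc (0 : ℝ) T) →
        -- each cycle: the lower leg from (X i, −α) reaches y = α after time Tm i at X (i+1)
        (∀ i : ℕ, i ≤ n →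
          ∃ xm ym : ℝ → ℝ,
            xm 0 = X i ∧ ym 0 = -α ∧ 0 ≤ Tm i ∧
            (∀ t ∈ Icc (0 : ℝ) (Tm i),
              HasDerivAt xm (f (xm t) (ym t) (-1)) t ∧
              HasDerivAt ym (g (xm t) (ym t) (-1)) t ∧
              xm t ∈ Icc (x₀ - γ) (xF T + γ) ∧ ym t ∈ Icc (-α) α) ∧
            ym (Tm i) = α ∧ (∀ t ∈ Ico (0 : ℝ) (Tm i), ym t < α) ∧
            xm (Tm i) = X (i + 1)) →
        ∀ i : ℕ, i < n →
          |xF (Ssum (i + 1)) - X (i + 1)| ≤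
            (1 + L * α) * |xF (Ssum i) - X i| + L * α ^ 2 := by
  have hC : 0 < C := hD.trans hDC
  -- smoothness of the pair maps
  have hemb : ContDiff ℝ (⊤ : ℕ∞) (fun p : ℝ × ℝ => (p.1, p.2, (-1:ℝ))) :=
    contDiff_fst.prodMk (contDiff_snd.prodMk contDiff_const)
  have hh2c : ContDiff ℝ (⊤ : ℕ∞) (fun p : ℝ × ℝ => f p.1 p.2 (-1)) := hf.comp hemb
  have hk2c : ContDiff ℝ (⊤ : ℕ∞) (fun p : ℝ × ℝ => g p.1 p.2 (-1)) := hg.comp hemb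
  -- Lipschitz constants on the rectangle Q
  obtain ⟨Kf, hKf⟩ := (isCompact_Icc.prod isCompact_Icc).exists_bound_of_continuousOn
    ((hh2c.continuous_fderiv (by simp)).continuousOn (s := Icc (-M) M ×ˢ Icc (-α₁) α₁))
  obtain ⟨Kg, hKg⟩ := (isCompact_Icc.prod isCompact_Icc).exists_bound_of_continuousOn
    ((hk2c.continuous_fderiv (by simp)).continuousOn (s := Icc (-M) M ×ˢ Icc (-α₁) α₁))
  set Q : Set (ℝ × ℝ) := Icc (-M) M ×ˢ Icc (-α₁) α₁ with hQdef
  set Lf : ℝ := max Kf 0 with hLfdef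
  set Lg : ℝ := max Kg 0 with hLgdef
  have hLf0 : 0 ≤ Lf := le_max_right _ _
  have hLg0 : 0 ≤ Lg := le_max_right _ _
  have hflip : ∀ p ∈ Q, ∀ q ∈ Q, |f q.1 q.2 (-1) - f p.1 p.2 (-1)| ≤ Lf * ‖q - p‖ :=
    fun p hp q hq => ((convex_Icc _ _).prod (convex_Icc _ _)).norm_image_sub_le_of_norm_fderiv_le
      (fun x _ => (hh2c.differentiable (by simp)).differentiableAt)
      (fun x hx => le_trans (hKf x hx) (le_max_left _ _)) hp hq
  have hglip : ∀ p ∈ Q, ∀ q ∈ Q, |g q.1 q.2 (-1) - g p.1 p.2 (-1)| ≤ Lg * ‖q - p‖ :=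
    fun p hp q hq => ((convex_Icc _ _).prod (convex_Icc _ _)).norm_image_sub_le_of_norm_fderiv_le
      (fun x _ => (hk2c.differentiable (by simp)).differentiableAt)
      (fun x hx => le_trans (hKg x hx) (le_max_left _ _)) hp hq
  have hmemQ : ∀ x y : ℝ, |x| ≤ M → |y| ≤ α₁ → ((x, y) : ℝ × ℝ) ∈ Q := by
    intro x y hx hy
    rw [abs_le] at hx hy
    exact ⟨⟨hx.1, hx.2⟩, ⟨hy.1, hy.2⟩⟩
  -- constants
  set LF : ℝ := Lf * (C + 1) + C * Lg with hLFdef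
  set cD : ℝ := 2 / D + 2 with hcDdef
  set K2 : ℝ := (C * Lg + Lf) * (2 * C / D + 1) with hK2def
  have hLF0 : 0 ≤ LF := by positivity
  have hK20 : 0 ≤ K2 := by positivity
  have hcD0 : 0 < cD := by positivity
  set L : ℝ := max (LF * cD) (LF * C * cD ^ 2 + K2 * (2 / D)) + 1 with hLdef
  have hL1 : LF * cD ≤ L - 1 := by
    simp only [hLdef, add_sub_cancel_right]; exact le_max_left _ _
  have hL2 : LF * C * cD ^ 2 + K2 * (2 / D) ≤ L - 1 := by
    simp only [hLdef, add_sub_cancel_right]; exact le_max_right _ _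
  have hLpos : 0 < L := by
    have := mul_nonneg hLF0 hcD0.le
    linarith only [this, hL1]
  refine ⟨L, hLpos, ?_⟩
  intro α hα hαα₀ X Tm Ssum n hX0 hS0 hSrec hSmem hcyc i hi
  have hαα₁ : α ≤ α₁ :=
    le_of_lt (lt_of_le_of_lt hαα₀ (lt_of_lt_of_le hα₀.2 (min_le_left _ _)))
  -- data of the i-th cycle
  obtain ⟨xm, ym, hxm0, hym0, hτ0, hode, hymτ, -, hxmτ⟩ := hcyc i hi.le
  set τ : ℝ := Tm i with hτdef
  have hSi : Ssum i ∈ Icc (0:ℝ) T := hSmem i hi.le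
  have hSi1 : Ssum (i+1) ∈ Icc (0:ℝ) T := hSmem (i+1) hi
  -- membership bounds for the hysteretic leg
  have hxmM : ∀ t ∈ Icc (0:ℝ) τ, |xm t| ≤ M := by
    intro t ht
    obtain ⟨-, -, hx, -⟩ := hode t ht
    exact abs_le.mpr ⟨le_trans hrect.1 hx.1, le_trans hx.2 hrect.2⟩
  have hymα : ∀ t ∈ Icc (0:ℝ) τ, |ym t| ≤ α := by
    intro t ht
    obtain ⟨-, -, -, hy⟩ := hode t ht
    exact abs_le.mpr ⟨hy.1, hy.2⟩
  have hmemQ' : ∀ t ∈ Icc (0:ℝ) τ, ((xm t, ym t) : ℝ × ℝ) ∈ Q :=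
    fun t ht => hmemQ _ _ (hxmM t ht) (le_trans (hymα t ht) hαα₁)
  have hb : ∀ t ∈ Icc (0:ℝ) τ,
      D < f (xm t) (ym t) (-1) ∧ f (xm t) (ym t) (-1) < C ∧
      D < g (xm t) (ym t) (-1) ∧ g (xm t) (ym t) (-1) < C :=
    fun t ht => hbound _ _ (hxmM t ht) (le_trans (hymα t ht) hαα₁)
  -- continuity on the leg
  have hxmc : ContinuousOn xm (Icc 0 τ) := fun t ht =>
    (hode t ht).1.continuousAt.continuousWithinAt
  have hymc : ContinuousOn ym (Icc 0 τ) := fun t ht =>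
    (hode t ht).2.1.continuousAt.continuousWithinAt
  have hhc : ContinuousOn (fun t => f (xm t) (ym t) (-1)) (Icc 0 τ) :=
    hh2c.continuous.comp_continuousOn (hxmc.prodMk hymc)
  have hkc : ContinuousOn (fun t => g (xm t) (ym t) (-1)) (Icc 0 τ) :=
    hk2c.continuous.comp_continuousOn (hxmc.prodMk hymc)
  -- duration bound : D * τ ≤ 2α
  have hDτ : D * τ ≤ 2 * α := by
    have := (convex_Icc (0:ℝ) τ).mul_sub_le_image_sub_of_le_deriv hymc
      (fun t ht => by
        rw [interior_Icc] at ht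
        exact (hode t (Ioo_subset_Icc_self ht)).2.1.differentiableAt.differentiableWithinAt)
      (fun t ht => by
        rw [interior_Icc] at ht
        rw [(hode t (Ioo_subset_Icc_self ht)).2.1.deriv]
        exact (hb t (Ioo_subset_Icc_self ht)).2.2.1.le)
      0 ⟨le_rfl, hτ0⟩ τ ⟨hτ0, le_rfl⟩ hτ0
    rw [hym0, hymτ] at this
    linarith only [this]
  -- xm moves at speed at most C
  have hxmdisp : ∀ t ∈ Icc (0:ℝ) τ, |xm t - X i| ≤ C * τ := by
    intro t ht
    have h1 : ‖xm t - xm 0‖ ≤ C * ‖t - 0‖ :=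
      (convex_Icc (0:ℝ) τ).norm_image_sub_le_of_norm_hasDerivWithin_le
        (f' := fun t => f (xm t) (ym t) (-1))
        (fun s hs => (hode s hs).1.hasDerivWithinAt)
        (fun s hs => by
          have h2 := hb s hs
          rw [Real.norm_eq_abs, abs_le]
          constructor
          · linarith only [h2.1, hD, hC]
          · linarith only [h2.2.1])
        ⟨le_rfl, hτ0⟩ ht
    rw [hxm0] at h1
    rw [Real.norm_eq_abs, sub_zero, Real.norm_eq_abs, abs_of_nonneg ht.1] at h1
    calc |xm t - X i| ≤ C * t := h1
    _ ≤ C * τ := mul_le_mul_of_nonneg_left ht.2 hC.le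
  -- Filippov field bounds and Lipschitz property
  have hFb : ∀ x : ℝ, |x| ≤ M →
      0 ≤ f x 0 (-1) / (g x 0 (-1) + 1) ∧ f x 0 (-1) / (g x 0 (-1) + 1) ≤ C := by
    intro x hx
    obtain ⟨h1, h2, h3, h4⟩ := hbound x 0 hx (by rw [abs_zero]; exact hα₁.le)
    have hb1 : (1:ℝ) ≤ g x 0 (-1) + 1 := by linarith only [h3, hD]
    constructor
    · exact div_nonneg (by linarith only [h1, hD]) (by linarith only [hb1])
    · exact le_trans (div_le_self (by linarith only [h1, hD]) hb1) h2.le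
  have hFlip : ∀ x : ℝ, |x| ≤ M → ∀ x' : ℝ, |x'| ≤ M →
      |f x 0 (-1) / (g x 0 (-1) + 1) - f x' 0 (-1) / (g x' 0 (-1) + 1)| ≤ LF * |x - x'| := by
    intro x hx x' hx'
    obtain ⟨h1, h2, h3, h4⟩ := hbound x 0 hx (by rw [abs_zero]; exact hα₁.le)
    obtain ⟨h1', h2', h3', h4'⟩ := hbound x' 0 hx' (by rw [abs_zero]; exact hα₁.le)
    have hq : ((x, 0) : ℝ × ℝ) ∈ Q := hmemQ x 0 hx (by rw [abs_zero]; exact hα₁.le)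
    have hq' : ((x', 0) : ℝ × ℝ) ∈ Q := hmemQ x' 0 hx' (by rw [abs_zero]; exact hα₁.le)
    have hnorm : ‖((x, (0:ℝ)) : ℝ × ℝ) - (x', 0)‖ = |x - x'| := by
      simp [Prod.norm_def, Real.norm_eq_abs]
    have hdf : |f x 0 (-1) - f x' 0 (-1)| ≤ Lf * |x - x'| := by
      have := hflip (x', 0) hq' (x, 0) hq
      rwa [hnorm] at this
    have hdg : |g x 0 (-1) - g x' 0 (-1)| ≤ Lg * |x - x'| := by
      have := hglip (x', 0) hq' (x, 0) hq
      rwa [hnorm] at this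
    set a := f x 0 (-1) with ha
    set b := g x 0 (-1) + 1 with hbb
    set a' := f x' 0 (-1) with ha'
    set b' := g x' 0 (-1) + 1 with hbb'
    have hbpos : (1:ℝ) < b := by rw [hbb]; linarith only [h3, hD]
    have hbpos' : (1:ℝ) < b' := by rw [hbb']; linarith only [h3', hD]
    have hkey : a / b - a' / b' = ((a - a') * b' + a' * (b' - b)) / (b * b') := by
      field_simp
      ring
    rw [hkey, abs_div]
    have e1 : |(a - a') * b'| ≤ Lf * |x - x'| * (C + 1) := by
      rw [abs_mul]
      have hb'le : |b'| ≤ C + 1 := by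
        rw [abs_of_pos (by linarith only [hbpos'])]
        rw [hbb']; linarith only [h4']
      exact mul_le_mul hdf hb'le (abs_nonneg _)
        (mul_nonneg hLf0 (abs_nonneg _))
    have e2 : |a' * (b' - b)| ≤ C * (Lg * |x - x'|) := by
      rw [abs_mul]
      have ha'le : |a'| ≤ C := by
        rw [abs_of_pos (by rw [ha']; linarith only [h1', hD])]
        rw [ha']; exact h2'.le
      have hbb'' : |b' - b| ≤ Lg * |x - x'| := by
        have heq : b' - b = -(g x 0 (-1) - g x' 0 (-1)) := by rw [hbb, hbb']; ring
        rw [heq, abs_neg]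
        exact hdg
      exact mul_le_mul ha'le hbb'' (abs_nonneg _) hC.le
    have hnum : |(a - a') * b' + a' * (b' - b)| ≤
        Lf * |x - x'| * (C + 1) + C * (Lg * |x - x'|) := by
      calc |(a - a') * b' + a' * (b' - b)| ≤ |(a - a') * b'| + |a' * (b' - b)| := abs_add_le _ _
      _ ≤ Lf * |x - x'| * (C + 1) + C * (Lg * |x - x'|) := by linarith only [e1, e2]
    have hden : (1:ℝ) ≤ |b * b'| := by
      rw [abs_of_pos (by positivity)]
      calc (1:ℝ) = 1 * 1 := by norm_num
      _ ≤ b * b' := mul_le_mul hbpos.le hbpos'.le (by norm_num) (by linarith only [hbpos])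
    calc |(a - a') * b' + a' * (b' - b)| / |b * b'|
        ≤ |(a - a') * b' + a' * (b' - b)| := div_le_self (abs_nonneg _) hden
    _ ≤ Lf * |x - x'| * (C + 1) + C * (Lg * |x - x'|) := hnum
    _ = LF * |x - x'| := by rw [hLFdef]; ring
  -- xF is C-Lipschitz on [0,T]
  have hxFlip : ∀ s ∈ Icc (0:ℝ) T, ∀ t ∈ Icc (0:ℝ) T, |xF t - xF s| ≤ C * |t - s| := by
    intro s hs t ht
    have := (convex_Icc (0:ℝ) T).norm_image_sub_le_of_norm_hasDerivWithin_le
      (f' := fun u => f (xF u) 0 (-1) / (g (xF u) 0 (-1) + 1))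
      (fun u hu => (hxF u hu).hasDerivWithinAt)
      (fun u hu => by
        have hxu := hxFM u hu
        have hxu' : |xF u| ≤ M := abs_le.mpr ⟨hxu.1.le, hxu.2.le⟩
        obtain ⟨e1, e2⟩ := hFb (xF u) hxu'
        rw [Real.norm_eq_abs, abs_of_nonneg e1]
        exact e2) hs ht
    rwa [Real.norm_eq_abs, Real.norm_eq_abs] at this
  -- FTC on the hysteretic leg
  have hB : ∫ t in (0:ℝ)..τ, f (xm t) (ym t) (-1) = X (i+1) - X i := by
    rw [← hxm0, ← hxmτ]
    refine intervalIntegral.integral_eq_sub_of_hasDerivAt (fun t ht => ?_) ?_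
    · exact (hode t (by rwa [uIcc_of_le hτ0] at ht)).1
    · exact (hhc.mono (by rw [uIcc_of_le hτ0])).intervalIntegrable
  have hK : ∫ t in (0:ℝ)..τ, g (xm t) (ym t) (-1) = 2 * α := by
    have h6 : ∫ t in (0:ℝ)..τ, g (xm t) (ym t) (-1) = ym τ - ym 0 := by
      refine intervalIntegral.integral_eq_sub_of_hasDerivAt (fun t ht => ?_) ?_
      · exact (hode t (by rwa [uIcc_of_le hτ0] at ht)).2.1
      · exact (hkc.mono (by rw [uIcc_of_le hτ0])).intervalIntegrable
    rw [h6, hym0, hymτ]; ring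
  -- FTC on the Filippov solution
  have hord : Ssum i ≤ Ssum (i+1) := by
    rw [hSrec]; simp only [← hτdef]; linarith only [hτ0, hα]
  have hSsub : Icc (Ssum i) (Ssum (i+1)) ⊆ Icc 0 T := Icc_subset_Icc hSi.1 hSi1.2
  have hxFc : ContinuousOn xF (Icc (Ssum i) (Ssum (i+1))) := fun t ht =>
    (hxF t (hSsub ht)).continuousAt.continuousWithinAt
  have hcontF : ContinuousOn (fun s => f (xF s) 0 (-1) / (g (xF s) 0 (-1) + 1))
      (Icc (Ssum i) (Ssum (i+1))) := by
    apply ContinuousOn.div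
    · exact hh2c.continuous.comp_continuousOn (hxFc.prodMk continuousOn_const)
    · exact (hk2c.continuous.comp_continuousOn (hxFc.prodMk continuousOn_const)).add
        continuousOn_const
    · intro s hs
      have hxs := hxFM s (hSsub hs)
      obtain ⟨-, -, h3, -⟩ := hbound (xF s) 0 (abs_le.mpr ⟨hxs.1.le, hxs.2.le⟩)
        (by rw [abs_zero]; exact hα₁.le)
      exact ne_of_gt (by linarith only [h3, hD])
  have hA : ∫ s in Ssum i..Ssum (i+1), f (xF s) 0 (-1) / (g (xF s) 0 (-1) + 1)
      = xF (Ssum (i+1)) - xF (Ssum i) := by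
    refine intervalIntegral.integral_eq_sub_of_hasDerivAt (fun s hs => ?_) ?_
    · exact hxF s (hSsub (by rwa [uIcc_of_le hord] at hs))
    · exact (hcontF.mono (by rw [uIcc_of_le hord])).intervalIntegrable
  -- notation for the errors and the constant field value
  set c : ℝ := f (X i) 0 (-1) / (g (X i) 0 (-1) + 1) with hcdef
  have hXiM : |X i| ≤ M := by
    have := hxmM 0 ⟨le_rfl, hτ0⟩
    rwa [hxm0] at this
  obtain ⟨hc0, hcC⟩ := hFb (X i) hXiM
  have hTt : Ssum (i+1) - Ssum i = τ + 2 * α := by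
    rw [hSrec]; simp only [← hτdef]; ring
  set ε : ℝ := xF (Ssum i) - X i with hεdef
  have hτα0 : (0:ℝ) ≤ τ + 2 * α := by linarith only [hτ0, hα]
  -- Estimate 1 : the Filippov increment is close to c * (τ + 2α)
  have hE1 : |xF (Ssum (i+1)) - xF (Ssum i) - c * (τ + 2*α)| ≤
      LF * (C * (τ + 2*α) + |ε|) * (τ + 2*α) := by
    have hid : xF (Ssum (i+1)) - xF (Ssum i) - c * (τ + 2*α)
        = ∫ s in Ssum i..Ssum (i+1),
            (f (xF s) 0 (-1) / (g (xF s) 0 (-1) + 1) - c) := by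
      rw [intervalIntegral.integral_sub
        ((hcontF.mono (by rw [uIcc_of_le hord])).intervalIntegrable)
        (intervalIntegrable_const), hA, intervalIntegral.integral_const, hTt]
      simp only [smul_eq_mul]
      ring
    rw [hid]
    have hbd := intervalIntegral.norm_integral_le_of_norm_le_const
      (C := LF * (C * (τ + 2*α) + |ε|))
      (f := fun s => f (xF s) 0 (-1) / (g (xF s) 0 (-1) + 1) - c)
      (a := Ssum i) (b := Ssum (i+1)) ?_
    · rw [Real.norm_eq_abs] at hbd
      calc |∫ s in Ssum i..Ssum (i+1), (f (xF s) 0 (-1) / (g (xF s) 0 (-1) + 1) - c)|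
          ≤ LF * (C * (τ + 2*α) + |ε|) * |Ssum (i+1) - Ssum i| := hbd
      _ = LF * (C * (τ + 2*α) + |ε|) * (τ + 2*α) := by
          rw [hTt, abs_of_nonneg hτα0]
    · intro s hs
      rw [uIoc_of_le hord] at hs
      have hsIcc : s ∈ Icc (Ssum i) (Ssum (i+1)) := ⟨hs.1.le, hs.2⟩
      have hsT : s ∈ Icc (0:ℝ) T := hSsub hsIcc
      have hxs := hxFM s hsT
      have hxs' : |xF s| ≤ M := abs_le.mpr ⟨hxs.1.le, hxs.2.le⟩
      have hlip := hFlip (xF s) hxs' (X i) hXiM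
      have hclose : |xF s - X i| ≤ C * (τ + 2*α) + |ε| := by
        have h1 : |xF s - xF (Ssum i)| ≤ C * |s - Ssum i| := hxFlip (Ssum i) hSi s hsT
        have h2 : |s - Ssum i| ≤ τ + 2*α := by
          rw [abs_of_nonneg (by linarith only [hs.1.le])]
          linarith only [hs.2, hTt]
        have h3 : C * |s - Ssum i| ≤ C * (τ + 2*α) := mul_le_mul_of_nonneg_left h2 hC.le
        have h4 : |xF s - X i| ≤ |xF s - xF (Ssum i)| + |ε| := by
          have : xF s - X i = (xF s - xF (Ssum i)) + ε := by rw [hεdef]; ring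
          rw [this]; exact abs_add_le _ _
        linarith only [h1, h3, h4]
      rw [Real.norm_eq_abs]
      calc |f (xF s) 0 (-1) / (g (xF s) 0 (-1) + 1) - c| ≤ LF * |xF s - X i| := hlip
      _ ≤ LF * (C * (τ + 2*α) + |ε|) := mul_le_mul_of_nonneg_left hclose hLF0
  -- Estimate 2 : the hysteretic increment is close to c * (τ + 2α)
  have hE2 : |c * (τ + 2*α) - (X (i+1) - X i)| ≤ K2 * α * τ := by
    have hkint : IntervalIntegrable (fun t => g (xm t) (ym t) (-1))
        MeasureTheory.volume 0 τ := (hkc.mono (by rw [uIcc_of_le hτ0])).intervalIntegrable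
    have hhint : IntervalIntegrable (fun t => f (xm t) (ym t) (-1))
        MeasureTheory.volume 0 τ := (hhc.mono (by rw [uIcc_of_le hτ0])).intervalIntegrable
    have hid : c * (τ + 2*α) - (X (i+1) - X i)
        = ∫ t in (0:ℝ)..τ,
            (c * (g (xm t) (ym t) (-1) + 1) - f (xm t) (ym t) (-1)) := by
      rw [intervalIntegral.integral_sub (((hkint.add intervalIntegrable_const).const_mul c))
        hhint, intervalIntegral.integral_const_mul,
        intervalIntegral.integral_add hkint intervalIntegrable_const, hK,
        intervalIntegral.integral_const, hB]
      simp only [smul_eq_mul]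
      ring
    rw [hid]
    have hzero : c * (g (X i) 0 (-1) + 1) = f (X i) 0 (-1) := by
      rw [hcdef]
      have hne : g (X i) 0 (-1) + 1 ≠ 0 := by
        obtain ⟨-, -, h3, -⟩ := hbound (X i) 0 hXiM (by rw [abs_zero]; exact hα₁.le)
        exact ne_of_gt (by linarith only [h3, hD])
      field_simp
    have hbd := intervalIntegral.norm_integral_le_of_norm_le_const
      (C := K2 * α)
      (f := fun t => c * (g (xm t) (ym t) (-1) + 1) - f (xm t) (ym t) (-1))
      (a := 0) (b := τ) ?_
    · rw [Real.norm_eq_abs] at hbd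
      calc |∫ t in (0:ℝ)..τ, (c * (g (xm t) (ym t) (-1) + 1) - f (xm t) (ym t) (-1))|
          ≤ K2 * α * |τ - 0| := hbd
      _ = K2 * α * τ := by rw [sub_zero, abs_of_nonneg hτ0]
    · intro t ht
      rw [uIoc_of_le hτ0] at ht
      have htIcc : t ∈ Icc (0:ℝ) τ := ⟨ht.1.le, ht.2⟩
      have hq : ((xm t, ym t) : ℝ × ℝ) ∈ Q := hmemQ' t htIcc
      have hq' : ((X i, 0) : ℝ × ℝ) ∈ Q := hmemQ (X i) 0 hXiM
        (by rw [abs_zero]; exact hα₁.le)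
      have h2CD : (0:ℝ) ≤ 2 * C / D := by positivity
      have hdist : ‖((xm t, ym t) : ℝ × ℝ) - (X i, 0)‖ ≤ (2 * C / D + 1) * α := by
        rw [Prod.norm_def]
        apply max_le
        · rw [Real.norm_eq_abs]
          have hxd := hxmdisp t htIcc
          have hτb : C * τ ≤ 2 * C / D * α := by
            rw [div_mul_eq_mul_div, le_div_iff₀ hD]
            have := mul_le_mul_of_nonneg_left hDτ hC.le
            linarith only [this]
          calc |((xm t, ym t) : ℝ × ℝ).1 - ((X i, (0:ℝ)) : ℝ × ℝ).1| = |xm t - X i| := rfl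
          _ ≤ C * τ := hxd
          _ ≤ 2 * C / D * α := hτb
          _ ≤ (2 * C / D + 1) * α := by linarith only [hα]
        · rw [Real.norm_eq_abs]
          have hyd := hymα t htIcc
          have h2CDα : 0 ≤ 2 * C / D * α := mul_nonneg h2CD hα.le
          calc |((xm t, ym t) : ℝ × ℝ).2 - ((X i, (0:ℝ)) : ℝ × ℝ).2| = |ym t| := by simp
          _ ≤ α := hyd
          _ ≤ (2 * C / D + 1) * α := by linarith only [h2CDα]
      have hdf : |f (xm t) (ym t) (-1) - f (X i) 0 (-1)| ≤ Lf * ((2 * C / D + 1) * α) :=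
        le_trans (hflip (X i, 0) hq' (xm t, ym t) hq)
          (mul_le_mul_of_nonneg_left hdist hLf0)
      have hdg : |g (xm t) (ym t) (-1) - g (X i) 0 (-1)| ≤ Lg * ((2 * C / D + 1) * α) :=
        le_trans (hglip (X i, 0) hq' (xm t, ym t) hq)
          (mul_le_mul_of_nonneg_left hdist hLg0)
      show ‖c * (g (xm t) (ym t) (-1) + 1) - f (xm t) (ym t) (-1)‖ ≤ K2 * α
      rw [Real.norm_eq_abs]
      have hsplit2 : c * (g (xm t) (ym t) (-1) + 1) - f (xm t) (ym t) (-1)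
          = c * (g (xm t) (ym t) (-1) - g (X i) 0 (-1))
            - (f (xm t) (ym t) (-1) - f (X i) 0 (-1)) := by
        rw [← hzero]; ring
      rw [hsplit2]
      have t1 : |c * (g (xm t) (ym t) (-1) - g (X i) 0 (-1))|
          ≤ C * (Lg * ((2 * C / D + 1) * α)) := by
        rw [abs_mul, abs_of_nonneg hc0]
        exact mul_le_mul hcC hdg (abs_nonneg _) hC.le
      calc |c * (g (xm t) (ym t) (-1) - g (X i) 0 (-1))
            - (f (xm t) (ym t) (-1) - f (X i) 0 (-1))|
          ≤ |c * (g (xm t) (ym t) (-1) - g (X i) 0 (-1))|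
            + |f (xm t) (ym t) (-1) - f (X i) 0 (-1)| := abs_sub _ _
      _ ≤ C * (Lg * ((2 * C / D + 1) * α)) + Lf * ((2 * C / D + 1) * α) := by
          linarith only [t1, hdf]
      _ = K2 * α := by rw [hK2def]; ring
  -- triangle inequality
  have htri : |xF (Ssum (i+1)) - X (i+1)| ≤
      |ε| + LF * (C * (τ + 2*α) + |ε|) * (τ + 2*α) + K2 * α * τ := by
    have hsplit : xF (Ssum (i+1)) - X (i+1)
        = (ε + (xF (Ssum (i+1)) - xF (Ssum i) - c * (τ + 2*α)))
            + (c * (τ + 2*α) - (X (i+1) - X i)) := by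
      rw [hεdef]; ring
    have t1 : |(ε + (xF (Ssum (i+1)) - xF (Ssum i) - c * (τ + 2*α)))
          + (c * (τ + 2*α) - (X (i+1) - X i))|
        ≤ |ε + (xF (Ssum (i+1)) - xF (Ssum i) - c * (τ + 2*α))|
          + |c * (τ + 2*α) - (X (i+1) - X i)| := abs_add_le _ _
    have t2 : |ε + (xF (Ssum (i+1)) - xF (Ssum i) - c * (τ + 2*α))|
        ≤ |ε| + |xF (Ssum (i+1)) - xF (Ssum i) - c * (τ + 2*α)| := abs_add_le _ _
    rw [hsplit]
    linarith only [t1, t2, hE1, hE2]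
  -- final arithmetic
  have hτcd : τ + 2 * α ≤ cD * α := by
    rw [hcDdef]
    have h7 : τ * D ≤ 2 * α := by linarith only [hDτ]
    have h8 : τ ≤ 2 / D * α := by
      rw [div_mul_eq_mul_div, le_div_iff₀ hD]
      linarith only [hDτ]
    linarith only [h8]
  have hτ2 : τ ≤ 2 / D * α := by
    rw [div_mul_eq_mul_div, le_div_iff₀ hD]
    linarith only [hDτ]
  have hpow : (1 + L * α) * |ε| + L * α^2 = (1 + L * α) * |ε| + L * α^2 := rfl
  exact hysteresis_error_recursion_final_arith hLF0 hK20 hC hα (abs_nonneg ε)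
    hτ0 hτcd hτ2 (by positivity) (by linarith only [hL1, hLpos])
    (by linarith only [hL2, hLpos]) htri
end
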